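/- arXiv:2604.22870 — 5 statements merged into one kernel-verified Lean document; each statement's English description precedes it below -/
import Mathlib

section
/- For every directed graph G = (V, E), the number of homomorphisms from P₂ to G equals the number of feature-preserving homomorphisms from the gadgetisation P̃₂ of P₂ to the gadgetisation G̃ of G. -/
/-- A `2`-featured undirected graph: finite nonempty vertex set, symmetric edge
relation and feature map into `{0,1}²`. -/
structure UFG where
  V : Type
  [fintypeV : Fintype V]
  nonemptyV : Nonempty V
  E : V → V → Prop
  symm : ∀ x y, E x y → E y x
  f : V → Fin 2 → Bool

attribute [instance] UFG.fintypeV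

/-- A directed graph (finite nonempty vertex set, edge relation). -/
structure DGraph where
  V : Type
  [fintypeV : Fintype V]
  nonemptyV : Nonempty V
  E : V → V → Prop

attribute [instance] DGraph.fintypeV

/-- Vertices of the gadgetisation: three disjoint copies of `V`
(sources `gs v`, sinks `gt v`, identifiers `gi v`). -/
abbrev Gad (V : Type) : Type := V ⊕ V ⊕ V

def gs {V : Type} (v : V) : Gad V := Sum.inl v
def gt {V : Type} (v : V) : Gad V := Sum.inr (Sum.inl v)
def gi {V : Type} (v : V) : Gad V := Sum.inr (Sum.inr v)

/-- One orientation of the gadgetisation edges. -/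
inductive gadE0 {V : Type} (E : V → V → Prop) : Gad V → Gad V → Prop
  | st {v u : V} : E v u → gadE0 E (gs v) (gt u)
  | si (v : V) : gadE0 E (gs v) (gi v)
  | it (v : V) : gadE0 E (gi v) (gt v)

/-- Edges of the gadgetisation (symmetric closure). -/
def gadE {V : Type} (E : V → V → Prop) (x y : Gad V) : Prop :=
  gadE0 E x y ∨ gadE0 E y x

/-- Features of the gadgetisation: `(1,0)` on sources, `(0,1)` on sinks,
`(0,0)` on identifiers. -/
def gadf {V : Type} : Gad V → Fin 2 → Bool :=
  Sum.elim (fun _ => ![true, false])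
    (Sum.elim (fun _ => ![false, true]) (fun _ => ![false, false]))

/-- The gadgetisation of a directed graph as a `2`-featured undirected graph. -/
def gadget (D : DGraph) : UFG where
  V := Gad D.V
  nonemptyV := ⟨gs (Classical.choice D.nonemptyV)⟩
  E := gadE D.E
  symm := fun _ _ h => h.symm
  f := gadf

/-- `≡^{L,c}` : the `L`-turn `2`-pebble `c`-counting back-and-forth equivalence on
pointed `2`-featured undirected graphs. -/
def uequiv (c : ℕ) : (L : ℕ) → (G₁ G₂ : UFG) → G₁.V → G₂.V → Prop
  | 0, G₁, G₂, v₁, v₂ => G₁.f v₁ = G₂.f v₂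
  | L + 1, G₁, G₂, v₁, v₂ =>
      G₁.f v₁ = G₂.f v₂ ∧
      (∀ k, k ≤ c → ∀ u₁ : Fin k → G₁.V, Function.Injective u₁ →
        ∃ u₂ : Fin k → G₂.V, Function.Injective u₂ ∧
          ∀ i, (G₁.E v₁ (u₁ i) ↔ G₂.E v₂ (u₂ i)) ∧ uequiv c L G₁ G₂ (u₁ i) (u₂ i)) ∧
      (∀ k, k ≤ c → ∀ u₂ : Fin k → G₂.V, Function.Injective u₂ →
        ∃ u₁ : Fin k → G₁.V, Function.Injective u₁ ∧
          ∀ i, (G₁.E v₁ (u₁ i) ↔ G₂.E v₂ (u₂ i)) ∧ uequiv c L G₁ G₂ (u₁ i) (u₂ i))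
/-- The edge relation of the directed path `P₂` on vertices `{0,1,2}`. -/
def p2E : Fin 3 → Fin 3 → Prop := fun a b => (a = 0 ∧ b = 1) ∨ (a = 1 ∧ b = 2)


section Aux

variable {V : Type}

def Fmap (g : Fin 3 → V) : Gad (Fin 3) → Gad V := Sum.map g (Sum.map g g)

lemma Fmap_gs (g : Fin 3 → V) (v : Fin 3) : Fmap g (gs v) = gs (g v) := rfl
lemma Fmap_gt (g : Fin 3 → V) (v : Fin 3) : Fmap g (gt v) = gt (g v) := rfl
lemma Fmap_gi (g : Fin 3 → V) (v : Fin 3) : Fmap g (gi v) = gi (g v) := rfl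

lemma Fmap_inj : Function.Injective (Fmap (V := V)) := by
  intro g₁ g₂ h
  funext v
  have := congrFun h (gs v)
  simpa [Fmap, gs, Sum.map] using this

lemma gadE_gs_gi {E : V → V → Prop} {a b : V} (h : gadE E (gs a) (gi b)) : a = b := by
  rcases h with h | h <;> cases h <;> rfl

lemma gadE_gi_gt {E : V → V → Prop} {a b : V} (h : gadE E (gi a) (gt b)) : a = b := by
  rcases h with h | h <;> cases h <;> rfl

lemma gadE_gs_gt {E : V → V → Prop} {a b : V} (h : gadE E (gs a) (gt b)) : E a b := by
  rcases h with h | h <;> cases h <;> assumption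

lemma feat_gs {x : Gad V} (hx : gadf x = ![true, false]) : ∃ v, x = gs v := by
  rcases x with v | v | v
  · exact ⟨v, rfl⟩
  · exact absurd (congrFun hx 0) (by simp [gadf])
  · exact absurd (congrFun hx 0) (by simp [gadf])

lemma feat_gt {x : Gad V} (hx : gadf x = ![false, true]) : ∃ v, x = gt v := by
  rcases x with v | v | v
  · exact absurd (congrFun hx 0) (by simp [gadf])
  · exact ⟨v, rfl⟩
  · exact absurd (congrFun hx 1) (by simp [gadf])

lemma feat_gi {x : Gad V} (hx : gadf x = ![false, false]) : ∃ v, x = gi v := by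
  rcases x with v | v | v
  · exact absurd (congrFun hx 0) (by simp [gadf])
  · exact absurd (congrFun hx 1) (by simp [gadf])
  · exact ⟨v, rfl⟩

end Aux

/-- For every directed graph `G = (V, E)`, the number of
homomorphisms from `P₂` to `G` equals the number of feature-preserving
homomorphisms from the gadgetisation of `P₂` to the gadgetisation of `G`. -/
theorem stmt4 {V : Type} [Fintype V] [Nonempty V] (E : V → V → Prop) :
    Set.ncard {h : Fin 3 → V | E (h 0) (h 1) ∧ E (h 1) (h 2)} =
      Set.ncard {h : Gad (Fin 3) → Gad V |
        (∀ x, gadf (h x) = gadf x) ∧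
        ∀ x y, gadE p2E x y → gadE E (h x) (h y)} := by
  have key : {h : Gad (Fin 3) → Gad V |
        (∀ x, gadf (h x) = gadf x) ∧
        ∀ x y, gadE p2E x y → gadE E (h x) (h y)} =
      Fmap '' {h : Fin 3 → V | E (h 0) (h 1) ∧ E (h 1) (h 2)} := by
    ext h
    constructor
    · rintro ⟨hf, he⟩
      have hs : ∀ v : Fin 3, ∃ w, h (gs v) = gs w := fun v =>
        feat_gs (by simpa [gadf, gs] using hf (gs v))
      have ht : ∀ v : Fin 3, ∃ w, h (gt v) = gt w := fun v =>
        feat_gt (by simpa [gadf, gt] using hf (gt v))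
      have hi : ∀ v : Fin 3, ∃ w, h (gi v) = gi w := fun v =>
        feat_gi (by simpa [gadf, gi] using hf (gi v))
      choose σ hσ using hs
      choose τ hτ using ht
      choose ι hι using hi
      have hσι : ∀ v, σ v = ι v := by
        intro v
        have h1 : gadE E (h (gs v)) (h (gi v)) := he _ _ (Or.inl (gadE0.si v))
        rw [hσ, hι] at h1
        exact gadE_gs_gi h1
      have hστ : ∀ v, σ v = τ v := by
        intro v
        have h2 : gadE E (h (gi v)) (h (gt v)) := he _ _ (Or.inl (gadE0.it v))
        rw [hι, hτ] at h2
        exact (hσι v).trans (gadE_gi_gt h2)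
      have hedge : ∀ v u : Fin 3, p2E v u → E (σ v) (σ u) := by
        intro v u hvu
        have := he _ _ (Or.inl (gadE0.st hvu))
        rw [hσ, hτ] at this
        rw [hστ u]
        exact gadE_gs_gt this
      refine ⟨σ, ⟨hedge 0 1 (Or.inl ⟨rfl, rfl⟩), hedge 1 2 (Or.inr ⟨rfl, rfl⟩)⟩, ?_⟩
      funext x
      rcases x with v | v | v
      · exact ((hσ v).symm : _)
      · exact (Fmap_gt σ v).trans ((congrArg gt (hστ v)).trans (hτ v).symm)
      · exact (Fmap_gi σ v).trans ((congrArg gi (hσι v)).trans (hι v).symm)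
    · rintro ⟨g, ⟨h01, h12⟩, rfl⟩
      constructor
      · intro x
        rcases x with v | v | v <;> rfl
      · intro x y hxy
        have step : ∀ a b : Gad (Fin 3), gadE0 p2E a b → gadE0 E (Fmap g a) (Fmap g b) := by
          intro a b hab
          cases hab with
          | st hp =>
            refine gadE0.st ?_
            rcases hp with ⟨rfl, rfl⟩ | ⟨rfl, rfl⟩
            · exact h01
            · exact h12
          | si v => exact gadE0.si (g v)
          | it v => exact gadE0.it (g v)
        rcases hxy with hxy | hxy
        · exact Or.inl (step _ _ hxy)
        · exact Or.inr (step _ _ hxy)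
  rw [key, Set.ncard_image_of_injective _ Fmap_inj]
end

section
/- There exists a first-order formula φ(x) with one free variable over the signature with unary predicates P₁, P₂ and a binary predicate E such that for every 2-featured pointed undirected graph (G, v) (interpreting Pᵢ as {u : f(u)[i] = 1} and E as the symmetric edge relation): G, v ⊨ φ if and only if G is isomorphic (as a featured graph) to the gadgetisation of a strict linear order. -/
/-- Relation symbols of the signature for `d`-featured graphs:
unary predicates `P i` for `i < d` and a binary predicate `E`. -/
inductive DRels (d : ℕ) : ℕ → Type
  | P : Fin d → DRels d 1
  | E : DRels d 2

/-- The first-order language of `d`-featured graphs. -/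
def GLang (d : ℕ) : FirstOrder.Language :=
  ⟨fun _ => Empty, DRels d⟩
/-- A binary relation is a strict linear order if it is irreflexive, transitive
and total. -/
def IsSLO {V : Type} (E : V → V → Prop) : Prop :=
  (∀ v, ¬ E v v) ∧ (∀ u v w, E u v → E v w → E u w) ∧
  (∀ u v : V, u ≠ v → E u v ∨ E v u)
/-- A `2`-featured undirected graph as a first-order structure for `GLang 2`,
interpreting `P i` by the `i`-th feature and `E` by the (symmetric) edge relation. -/
def ufgStruct (G : UFG) : (GLang 2).Structure G.V where
  funMap := fun e _ => e.elim
  RelMap := fun {_} r x =>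
    match r with
    | DRels.P i => G.f (x 0) i = true
    | DRels.E => G.E (x 0) (x 1)

/-!
A featured graph is the gadgetisation of a strict linear order exactly when (i) every feature
is `(1,0)`, `(0,1)` or `(0,0)` (sources, targets, identifiers), (ii) no edge joins two vertices
of the same feature, (iii) the source–identifier and the identifier–target edges are perfect
matchings, and (iv) the relation "`s` is adjacent to the target matched, through its
identifier, with `s'`" is a strict linear order on the sources. Each condition is first order,
and (iii) gives bijections `σ`, `τ` from the identifiers onto the sources and targets, so that
`σ ⊕ τ ⊕ id` identifies the gadgetisation of (identifiers, `i < j :↔ σ i ~ τ j`) with the graph.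
The formula ignores its free variable.
-/

attribute [local instance] ufgStruct

open FirstOrder Language

lemma UFG.adj_comm (G : UFG) {x y : G.V} : G.E x y ↔ G.E y x :=
  ⟨G.symm x y, G.symm y x⟩

def UFG.langEquiv {G H : UFG} (e : G.V ≃ H.V) (hE : ∀ x y, G.E x y ↔ H.E (e x) (e y))
    (hf : ∀ x, G.f x = H.f (e x)) : G.V ≃[GLang 2] H.V where
  toEquiv := e
  map_fun' f := Empty.elim f
  map_rel' r x := by
    cases r with
    | P k =>
      show H.f (e (x 0)) k = true ↔ G.f (x 0) k = true
      rw [hf]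
    | E => exact (hE (x 0) (x 1)).symm

lemma IsSLO.of_surjective {V W : Type} {r : V → V → Prop} {s : W → W → Prop} {f : V → W}
    (hf : Function.Surjective f) (h : ∀ a b, r a b ↔ s (f a) (f b)) (hr : IsSLO r) : IsSLO s := by
  obtain ⟨irrefl, trans, total⟩ := hr
  refine ⟨hf.forall.2 fun a => (h a a).not.1 (irrefl a), ?_, ?_⟩
  · simp only [hf.forall, ← h]
    exact trans
  · simp only [hf.forall, ← h]
    exact fun a b hab => total a b (ne_of_apply_ne f hab)

noncomputable def fiberSumEquiv {α β : Type*} (f : α → β) {b₁ b₂ b₃ : β}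
    (h₁₂ : b₁ ≠ b₂) (h₁₃ : b₁ ≠ b₃) (h₂₃ : b₂ ≠ b₃) (hf : ∀ x, f x = b₁ ∨ f x = b₂ ∨ f x = b₃) :
    {x // f x = b₁} ⊕ {x // f x = b₂} ⊕ {x // f x = b₃} ≃ α :=
  Equiv.ofBijective (Sum.elim Subtype.val (Sum.elim Subtype.val Subtype.val)) <| by
    refine ⟨?_, fun x => ?_⟩
    · rintro (⟨a, ha⟩ | ⟨a, ha⟩ | ⟨a, ha⟩) (⟨b, hb⟩ | ⟨b, hb⟩ | ⟨b, hb⟩) (rfl : a = b) <;>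
        first | rfl | grind
    · rcases hf x with h | h | h
      exacts [⟨.inl ⟨x, h⟩, rfl⟩, ⟨.inr (.inl ⟨x, h⟩), rfl⟩, ⟨.inr (.inr ⟨x, h⟩), rfl⟩]

namespace GadgetDefinability

def UniqueNbr {α : Type*} (R : α → α → Prop) (X Y : α → Prop) : Prop :=
  ∀ x, X x → ∃! y, Y y ∧ R x y

namespace UniqueNbr

variable {α : Type*} {R : α → α → Prop} {X Y : α → Prop}

lemma of_rel_iff {β : Type*} {a b : β → α} (hX : ∀ {x}, X x ↔ ∃ v, x = a v)
    (hY : ∀ {y}, Y y ↔ ∃ w, y = b w) (hab : ∀ {v w}, R (a v) (b w) ↔ v = w) :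
    UniqueNbr R X Y := by
  intro x hx
  obtain ⟨v, rfl⟩ := hX.1 hx
  refine ⟨b v, ⟨hY.2 ⟨v, rfl⟩, hab.2 rfl⟩, ?_⟩
  rintro y ⟨hy, hvy⟩
  obtain ⟨w, rfl⟩ := hY.1 hy
  rw [hab.1 hvy]

noncomputable def nbr (h : UniqueNbr R X Y) (x : {x // X x}) : {y // Y y} :=
  ⟨(h x x.2).exists.choose, (h x x.2).exists.choose_spec.1⟩

lemma rel_iff_eq_nbr (h : UniqueNbr R X Y) {x : {x // X x}} {y : {y // Y y}} :
    R x y ↔ y = h.nbr x :=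
  ⟨fun hxy => Subtype.ext ((h x x.2).unique ⟨y.2, hxy⟩ (h x x.2).exists.choose_spec),
    by rintro rfl; exact (h x x.2).exists.choose_spec.2⟩

noncomputable def equiv (hR : ∀ x y, R x y → R y x) (hXY : UniqueNbr R X Y)
    (hYX : UniqueNbr R Y X) : {x // X x} ≃ {y // Y y} where
  toFun := hXY.nbr
  invFun := hYX.nbr
  left_inv _ := (hYX.rel_iff_eq_nbr.1 (hR _ _ (hXY.rel_iff_eq_nbr.2 rfl))).symm
  right_inv _ := (hXY.rel_iff_eq_nbr.1 (hR _ _ (hYX.rel_iff_eq_nbr.2 rfl))).symm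

lemma rel_equiv_iff (hR : ∀ x y, R x y → R y x) (hXY : UniqueNbr R X Y) (hYX : UniqueNbr R Y X)
    {x : {x // X x}} {y : {y // Y y}} : R x y ↔ equiv hR hXY hYX x = y :=
  hXY.rel_iff_eq_nbr.trans eq_comm

end UniqueNbr

def IsSrc (G : UFG) (x : G.V) : Prop := G.f x = ![true, false]
def IsTgt (G : UFG) (x : G.V) : Prop := G.f x = ![false, true]
def IsIdf (G : UFG) (x : G.V) : Prop := G.f x = ![false, false]

def SrcLT (G : UFG) (s s' : G.V) : Prop :=
  ∃ i t, IsIdf G i ∧ IsTgt G t ∧ G.E s' i ∧ G.E i t ∧ G.E s t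

structure GadgetAxioms (G : UFG) : Prop where
  feature_ne : ∀ x, G.f x ≠ ![true, true]
  feature_ne_of_adj : ∀ x y, G.E x y → G.f x ≠ G.f y
  src_idf : UniqueNbr G.E (IsSrc G) (IsIdf G)
  tgt_idf : UniqueNbr G.E (IsTgt G) (IsIdf G)
  idf_src : UniqueNbr G.E (IsIdf G) (IsSrc G)
  idf_tgt : UniqueNbr G.E (IsIdf G) (IsTgt G)
  order : IsSLO (fun s s' : {x // IsSrc G x} => SrcLT G s s')

section Formulas

variable {α : Type} {n : ℕ}

def predF (k : Fin 2) (t : (GLang 2).Term (α ⊕ Fin n)) : (GLang 2).BoundedFormula α n :=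
  Relations.boundedFormula₁ (DRels.P k) t

def adjF (t₁ t₂ : (GLang 2).Term (α ⊕ Fin n)) : (GLang 2).BoundedFormula α n :=
  Relations.boundedFormula₂ (DRels.E : (GLang 2).Relations 2) t₁ t₂

def featF (c : Fin 2 → Bool) (t : (GLang 2).Term (α ⊕ Fin n)) : (GLang 2).BoundedFormula α n :=
  (if c 0 then predF 0 t else ∼(predF 0 t)) ⊓ (if c 1 then predF 1 t else ∼(predF 1 t))

def sameFeatF (t₁ t₂ : (GLang 2).Term (α ⊕ Fin n)) : (GLang 2).BoundedFormula α n :=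
  (predF 0 t₁ ⇔ predF 0 t₂) ⊓ (predF 1 t₁ ⇔ predF 1 t₂)

-- The two new bound variables are the identifier `&n` and the target `&(n + 1)`.
def srcLTF (a b : Fin n) : (GLang 2).BoundedFormula α n :=
  ∃' ∃' (featF ![false, false] &(Fin.last n).castSucc ⊓ featF ![false, true] &(Fin.last (n + 1)) ⊓
    adjF &b.castSucc.castSucc &(Fin.last n).castSucc ⊓
    adjF &(Fin.last n).castSucc &(Fin.last (n + 1)) ⊓
    adjF &a.castSucc.castSucc &(Fin.last (n + 1)))

def featureNeF : (GLang 2).Formula α :=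
  ∀' ∼(featF ![true, true] &0)

def featureNeOfAdjF : (GLang 2).Formula α :=
  ∀' ∀' (adjF &0 &1 ⟹ ∼(sameFeatF &0 &1))

def uniqueNbrF (c d : Fin 2 → Bool) : (GLang 2).Formula α :=
  ∀' (featF c &0 ⟹ ∃' ((featF d &1 ⊓ adjF &0 &1) ⊓ ∀' ((featF d &2 ⊓ adjF &0 &2) ⟹ &2 =' &1)))

def srcOrderF : (GLang 2).Formula α :=
  ∀' (featF ![true, false] &0 ⟹ ∼(srcLTF 0 0)) ⊓
  (∀' (featF ![true, false] &0 ⟹ ∀' (featF ![true, false] &1 ⟹ ∀' (featF ![true, false] &2 ⟹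
    srcLTF 0 1 ⟹ srcLTF 1 2 ⟹ srcLTF 0 2))) ⊓
  ∀' (featF ![true, false] &0 ⟹ ∀' (featF ![true, false] &1 ⟹
    ∼(&0 =' &1) ⟹ srcLTF 0 1 ⊔ srcLTF 1 0)))

def phi : (GLang 2).Formula (Fin 1) :=
  featureNeF ⊓ (featureNeOfAdjF ⊓
  (uniqueNbrF ![true, false] ![false, false] ⊓ (uniqueNbrF ![false, true] ![false, false] ⊓
  (uniqueNbrF ![false, false] ![true, false] ⊓ (uniqueNbrF ![false, false] ![false, true] ⊓
  srcOrderF)))))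

end Formulas

section Realize

variable {G : UFG} {α : Type} {n : ℕ} (w : α → G.V) (xs : Fin n → G.V)

@[simp] lemma realize_predF (k : Fin 2) (t : (GLang 2).Term (α ⊕ Fin n)) :
    (predF k t).Realize w xs ↔ G.f (t.realize (Sum.elim w xs)) k = true :=
  BoundedFormula.realize_rel₁

@[simp] lemma realize_adjF (t₁ t₂ : (GLang 2).Term (α ⊕ Fin n)) :
    (adjF t₁ t₂).Realize w xs ↔ G.E (t₁.realize (Sum.elim w xs)) (t₂.realize (Sum.elim w xs)) :=
  BoundedFormula.realize_rel₂

@[simp] lemma realize_featF (c : Fin 2 → Bool) (t : (GLang 2).Term (α ⊕ Fin n)) :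
    (featF c t).Realize w xs ↔ G.f (t.realize (Sum.elim w xs)) = c := by
  rw [funext_iff, Fin.forall_fin_two]
  cases h₀ : c 0 <;> cases h₁ : c 1 <;> simp [featF, h₀, h₁]

@[simp] lemma realize_sameFeatF (t₁ t₂ : (GLang 2).Term (α ⊕ Fin n)) :
    (sameFeatF t₁ t₂).Realize w xs ↔
      G.f (t₁.realize (Sum.elim w xs)) = G.f (t₂.realize (Sum.elim w xs)) := by
  simp [sameFeatF, funext_iff, Fin.forall_fin_two]

@[simp] lemma realize_srcLTF (a b : Fin n) :
    (srcLTF a b).Realize w xs ↔ SrcLT G (xs a) (xs b) := by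
  simp [srcLTF, SrcLT, IsIdf, IsTgt, and_assoc]

lemma realize_featureNeF : (featureNeF (α := α)).Realize w ↔ ∀ x, G.f x ≠ ![true, true] := by
  simp [featureNeF, Formula.Realize, Fin.snoc]

lemma realize_featureNeOfAdjF :
    (featureNeOfAdjF (α := α)).Realize w ↔ ∀ x y, G.E x y → G.f x ≠ G.f y := by
  simp [featureNeOfAdjF, Formula.Realize, Fin.snoc]

lemma realize_uniqueNbrF (c d : Fin 2 → Bool) :
    (uniqueNbrF c d).Realize w ↔ UniqueNbr G.E (G.f · = c) (G.f · = d) := by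
  simp [uniqueNbrF, UniqueNbr, Formula.Realize, ExistsUnique, and_imp, Fin.snoc]

lemma realize_srcOrderF :
    (srcOrderF (α := α)).Realize w ↔ IsSLO (fun s s' : {x // IsSrc G x} => SrcLT G s s') := by
  simp [srcOrderF, IsSLO, Formula.Realize, IsSrc, Subtype.forall, Fin.snoc]

end Realize

lemma realize_phi (G : UFG) (v : Fin 1 → G.V) : phi.Realize v ↔ GadgetAxioms G := by
  simp only [phi, Formula.realize_inf, realize_featureNeF, realize_featureNeOfAdjF,
    realize_uniqueNbrF, realize_srcOrderF]
  constructor <;> rintro ⟨h₁, h₂, h₃, h₄, h₅, h₆, h₇⟩ <;> exact ⟨h₁, h₂, h₃, h₄, h₅, h₆, h₇⟩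

section Gadget

variable {V : Type} {E : V → V → Prop} {v w : V}

lemma gad_cases (p : Gad V) : (∃ v, p = gs v) ∨ (∃ v, p = gt v) ∨ ∃ v, p = gi v := by
  rcases p with v | v | v
  exacts [.inl ⟨v, rfl⟩, .inr (.inl ⟨v, rfl⟩), .inr (.inr ⟨v, rfl⟩)]

@[simp] lemma gadE_gs_gs : ¬ gadE E (gs v) (gs w) := by rintro (h | h) <;> cases h
@[simp] lemma gadE_gt_gt : ¬ gadE E (gt v) (gt w) := by rintro (h | h) <;> cases h
@[simp] lemma gadE_gi_gi : ¬ gadE E (gi v) (gi w) := by rintro (h | h) <;> cases h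

@[simp] lemma gadE_gs_gt : gadE E (gs v) (gt w) ↔ E v w :=
  ⟨by rintro (h | h) <;> cases h; assumption, fun h => .inl (.st h)⟩

@[simp] lemma gadE_gt_gs : gadE E (gt v) (gs w) ↔ E w v := or_comm.trans gadE_gs_gt

@[simp] lemma gadE_gs_gi : gadE E (gs v) (gi w) ↔ v = w :=
  ⟨by rintro (h | h) <;> cases h; rfl, by rintro rfl; exact .inl (.si v)⟩

@[simp] lemma gadE_gi_gs : gadE E (gi v) (gs w) ↔ v = w :=
  or_comm.trans (gadE_gs_gi.trans eq_comm)

@[simp] lemma gadE_gi_gt : gadE E (gi v) (gt w) ↔ v = w :=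
  ⟨by rintro (h | h) <;> cases h; rfl, by rintro rfl; exact .inl (.it v)⟩

@[simp] lemma gadE_gt_gi : gadE E (gt v) (gi w) ↔ v = w :=
  or_comm.trans (gadE_gi_gt.trans eq_comm)

end Gadget

section GadgetOfOrder

variable {D : DGraph}

lemma isSrc_gadget_iff {x : Gad D.V} : IsSrc (gadget D) x ↔ ∃ v, x = gs v := by
  rcases gad_cases x with ⟨v, rfl⟩ | ⟨v, rfl⟩ | ⟨v, rfl⟩ <;> simp [IsSrc, gadget, gadf, gs, gt, gi]

lemma isTgt_gadget_iff {x : Gad D.V} : IsTgt (gadget D) x ↔ ∃ v, x = gt v := by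
  rcases gad_cases x with ⟨v, rfl⟩ | ⟨v, rfl⟩ | ⟨v, rfl⟩ <;> simp [IsTgt, gadget, gadf, gs, gt, gi]

lemma isIdf_gadget_iff {x : Gad D.V} : IsIdf (gadget D) x ↔ ∃ v, x = gi v := by
  rcases gad_cases x with ⟨v, rfl⟩ | ⟨v, rfl⟩ | ⟨v, rfl⟩ <;> simp [IsIdf, gadget, gadf, gs, gt, gi]

lemma srcLT_gadget_iff {v w : D.V} : SrcLT (gadget D) (gs v) (gs w) ↔ D.E v w := by
  constructor
  · rintro ⟨i, t, hi, ht, hwi, hit, hvt⟩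
    obtain ⟨i, rfl⟩ := isIdf_gadget_iff.1 hi
    obtain ⟨t, rfl⟩ := isTgt_gadget_iff.1 ht
    simp_all [gadget]
  · exact fun hvw => ⟨gi w, gt w, isIdf_gadget_iff.2 ⟨w, rfl⟩, isTgt_gadget_iff.2 ⟨w, rfl⟩,
      by simp [gadget], by simp [gadget], by simpa [gadget] using hvw⟩

lemma gadgetAxioms_gadget (hD : IsSLO D.E) : GadgetAxioms (gadget D) where
  feature_ne x := by
    rcases gad_cases x with ⟨v, rfl⟩ | ⟨v, rfl⟩ | ⟨v, rfl⟩ <;> simp [gadget, gadf, gs, gt, gi]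
  feature_ne_of_adj x y := by
    rcases gad_cases x with ⟨v, rfl⟩ | ⟨v, rfl⟩ | ⟨v, rfl⟩ <;>
      rcases gad_cases y with ⟨w, rfl⟩ | ⟨w, rfl⟩ | ⟨w, rfl⟩ <;> simp [gadget] <;>
      simp [gadf, gs, gt, gi]
  src_idf := .of_rel_iff isSrc_gadget_iff isIdf_gadget_iff gadE_gs_gi
  tgt_idf := .of_rel_iff isTgt_gadget_iff isIdf_gadget_iff gadE_gt_gi
  idf_src := .of_rel_iff isIdf_gadget_iff isSrc_gadget_iff gadE_gi_gs
  idf_tgt := .of_rel_iff isIdf_gadget_iff isTgt_gadget_iff gadE_gi_gt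
  order := IsSLO.of_surjective (f := fun v => ⟨gs v, isSrc_gadget_iff.2 ⟨v, rfl⟩⟩)
    (fun ⟨_, hx⟩ => (isSrc_gadget_iff.1 hx).imp fun _ hv => Subtype.ext hv.symm)
    (fun _ _ => srcLT_gadget_iff.symm) hD

end GadgetOfOrder

namespace GadgetAxioms

variable {G : UFG}

lemma feature_cases (h : GadgetAxioms G) (x : G.V) : IsSrc G x ∨ IsTgt G x ∨ IsIdf G x := by
  have : ∀ c : Fin 2 → Bool, c ≠ ![true, true] →
      c = ![true, false] ∨ c = ![false, true] ∨ c = ![false, false] := by decide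
  exact this _ (h.feature_ne x)

lemma not_adj_of_feature_eq (h : GadgetAxioms G) {x y : G.V} (hxy : G.f x = G.f y) : ¬ G.E x y :=
  fun hE => h.feature_ne_of_adj x y hE hxy

noncomputable def srcEquiv (h : GadgetAxioms G) : {i // IsIdf G i} ≃ {s // IsSrc G s} :=
  UniqueNbr.equiv G.symm h.idf_src h.src_idf

noncomputable def tgtEquiv (h : GadgetAxioms G) : {i // IsIdf G i} ≃ {t // IsTgt G t} :=
  UniqueNbr.equiv G.symm h.idf_tgt h.tgt_idf

lemma adj_srcEquiv_iff (h : GadgetAxioms G) {i j : {i // IsIdf G i}} :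
    G.E i (h.srcEquiv j) ↔ i = j :=
  (UniqueNbr.rel_equiv_iff _ _ _).trans h.srcEquiv.apply_eq_iff_eq

lemma adj_tgtEquiv_iff (h : GadgetAxioms G) {i j : {i // IsIdf G i}} :
    G.E i (h.tgtEquiv j) ↔ i = j :=
  (UniqueNbr.rel_equiv_iff _ _ _).trans h.tgtEquiv.apply_eq_iff_eq

lemma srcLT_srcEquiv_iff (h : GadgetAxioms G) {i j : {i // IsIdf G i}} :
    SrcLT G (h.srcEquiv i) (h.srcEquiv j) ↔ G.E (h.srcEquiv i) (h.tgtEquiv j) := by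
  constructor
  · rintro ⟨k, t, hk, ht, hjk, hkt, hit⟩
    obtain rfl : ⟨k, hk⟩ = j := h.adj_srcEquiv_iff.1 (G.symm _ _ hjk)
    obtain rfl : t = h.tgtEquiv ⟨k, hk⟩ :=
      congrArg Subtype.val ((UniqueNbr.rel_equiv_iff (y := ⟨t, ht⟩) _ _ _).1 hkt).symm
    exact hit
  · exact fun hit => ⟨j, h.tgtEquiv j, j.2, (h.tgtEquiv j).2,
      G.symm _ _ (h.adj_srcEquiv_iff.2 rfl), h.adj_tgtEquiv_iff.2 rfl, hit⟩

noncomputable def gadgetEquiv (h : GadgetAxioms G) : Gad {i // IsIdf G i} ≃ G.V :=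
  (Equiv.sumCongr h.srcEquiv (Equiv.sumCongr h.tgtEquiv (Equiv.refl _))).trans
    (fiberSumEquiv G.f (by decide) (by decide) (by decide) h.feature_cases)

@[simp] lemma gadgetEquiv_gs (h : GadgetAxioms G) (i : {i // IsIdf G i}) :
    h.gadgetEquiv (gs i) = h.srcEquiv i := rfl

@[simp] lemma gadgetEquiv_gt (h : GadgetAxioms G) (i : {i // IsIdf G i}) :
    h.gadgetEquiv (gt i) = h.tgtEquiv i := rfl

@[simp] lemma gadgetEquiv_gi (h : GadgetAxioms G) (i : {i // IsIdf G i}) :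
    h.gadgetEquiv (gi i) = i := rfl

noncomputable abbrev toDGraph (h : GadgetAxioms G) : DGraph where
  V := {i // IsIdf G i}
  fintypeV := Fintype.ofFinite _
  nonemptyV := G.nonemptyV.map fun x => (h.gadgetEquiv.symm x).elim id (Sum.elim id id)
  E i j := SrcLT G (h.srcEquiv i) (h.srcEquiv j)

lemma isSLO_toDGraph (h : GadgetAxioms G) : IsSLO h.toDGraph.E :=
  IsSLO.of_surjective h.srcEquiv.symm.surjective (fun _ _ => by simp) h.order

lemma adj_gadgetEquiv_iff (h : GadgetAxioms G) (p q : Gad h.toDGraph.V) :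
    G.E (h.gadgetEquiv p) (h.gadgetEquiv q) ↔ gadE h.toDGraph.E p q := by
  rcases gad_cases p with ⟨i, rfl⟩ | ⟨i, rfl⟩ | ⟨i, rfl⟩ <;>
    rcases gad_cases q with ⟨j, rfl⟩ | ⟨j, rfl⟩ | ⟨j, rfl⟩ <;>
    simp only [gadgetEquiv_gs, gadgetEquiv_gt, gadgetEquiv_gi, gadE_gs_gs, gadE_gs_gt, gadE_gs_gi,
      gadE_gt_gs, gadE_gt_gt, gadE_gt_gi, gadE_gi_gs, gadE_gi_gt, gadE_gi_gi, iff_false]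
  · exact h.not_adj_of_feature_eq ((h.srcEquiv i).2.trans (h.srcEquiv j).2.symm)
  · exact h.srcLT_srcEquiv_iff.symm
  · exact G.adj_comm.trans (h.adj_srcEquiv_iff.trans eq_comm)
  · exact G.adj_comm.trans h.srcLT_srcEquiv_iff.symm
  · exact h.not_adj_of_feature_eq ((h.tgtEquiv i).2.trans (h.tgtEquiv j).2.symm)
  · exact G.adj_comm.trans (h.adj_tgtEquiv_iff.trans eq_comm)
  · exact h.adj_srcEquiv_iff
  · exact h.adj_tgtEquiv_iff
  · exact h.not_adj_of_feature_eq (i.2.trans j.2.symm)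

lemma feature_gadgetEquiv (h : GadgetAxioms G) (p : Gad h.toDGraph.V) :
    G.f (h.gadgetEquiv p) = gadf p := by
  rcases p with i | i | i
  exacts [(h.srcEquiv i).2, (h.tgtEquiv i).2, i.2]

end GadgetAxioms

end GadgetDefinability

open GadgetDefinability in
/-- There is a first-order formula `φ(x)` over the signature
`P₁, P₂, E` such that a pointed `2`-featured undirected graph satisfies `φ` iff
the graph is isomorphic (as a featured graph) to the gadgetisation of a strict
linear order. -/
theorem stmt5 :
    ∃ φ : (GLang 2).Formula (Fin 1),
      ∀ (G : UFG) (v : G.V),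
        (letI := ufgStruct G; φ.Realize (fun _ => v)) ↔
          ∃ D : DGraph, IsSLO D.E ∧
            ∃ e : G.V ≃ Gad D.V,
              (∀ x y, G.E x y ↔ gadE D.E (e x) (e y)) ∧ ∀ x, G.f x = gadf (e x) := by
  refine ⟨phi, fun G v => (realize_phi G _).trans ⟨fun h => ?_, ?_⟩⟩
  · refine ⟨h.toDGraph, h.isSLO_toDGraph, h.gadgetEquiv.symm, fun x y => ?_, fun x => ?_⟩
    · simpa using h.adj_gadgetEquiv_iff (h.gadgetEquiv.symm x) (h.gadgetEquiv.symm y)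
    · simpa using h.feature_gadgetEquiv (h.gadgetEquiv.symm x)
  · rintro ⟨D, hD, e, hE, hf⟩
    have hφ := StrongHomClass.realize_formula (UFG.langEquiv (H := gadget D) e hE hf) phi
      (v := fun _ => v)
    exact (realize_phi G _).1 (hφ.1 ((realize_phi (gadget D) _).2 (gadgetAxioms_gadget hD)))
end

section
/- There exists a simple 6-layer ACR-GNN N with input dimension 0 such that for every pointed 0-featured directed graph (G, v): N(G, v) = 1 if and only if G is a strict linear order. -/
/-- A `d`-featured directed graph: finite nonempty vertex set, edge relation,
and a feature map into `{0,1}^d` (represented as `Fin d → Bool`). -/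
structure FGraph (d : ℕ) where
  V : Type
  [fintypeV : Fintype V]
  nonemptyV : Nonempty V
  E : V → V → Prop
  f : V → Fin d → Bool

attribute [instance] FGraph.fintypeV

/-- `c`-graded `L`-turn bisimilarity between pointed `d`-featured graphs. -/
def bisim (d c : ℕ) : (L : ℕ) → (G₁ G₂ : FGraph d) → G₁.V → G₂.V → Prop
  | 0, G₁, G₂, v₁, v₂ => G₁.f v₁ = G₂.f v₂
  | L + 1, G₁, G₂, v₁, v₂ =>
      G₁.f v₁ = G₂.f v₂ ∧
      (∀ k, k ≤ c → ∀ u₁ : Fin k → G₁.V, Function.Injective u₁ →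
        (∀ i, G₁.E v₁ (u₁ i)) →
        ∃ u₂ : Fin k → G₂.V, Function.Injective u₂ ∧ (∀ i, G₂.E v₂ (u₂ i)) ∧
          ∀ i, bisim d c L G₁ G₂ (u₁ i) (u₂ i)) ∧
      (∀ k, k ≤ c → ∀ u₂ : Fin k → G₂.V, Function.Injective u₂ →
        (∀ i, G₂.E v₂ (u₂ i)) →
        ∃ u₁ : Fin k → G₁.V, Function.Injective u₁ ∧ (∀ i, G₁.E v₁ (u₁ i)) ∧
          ∀ i, bisim d c L G₁ G₂ (u₁ i) (u₂ i))

/-- `∼^{L,c,*}_∃` : `c`-graded `L`-turn bisimilarity with (unbounded) global counting. -/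
def bisimStar (d c L : ℕ) (G₁ G₂ : FGraph d) (v₁ : G₁.V) (v₂ : G₂.V) : Prop :=
  bisim d c L G₁ G₂ v₁ v₂ ∧
  (∀ u : G₁.V,
    Set.ncard {u₁ : G₁.V | bisim d c L G₁ G₁ u₁ u} =
      Set.ncard {u₂ : G₂.V | bisim d c L G₂ G₁ u₂ u}) ∧
  (∀ u : G₂.V,
    Set.ncard {u₁ : G₁.V | bisim d c L G₁ G₂ u₁ u} =
      Set.ncard {u₂ : G₂.V | bisim d c L G₂ G₂ u₂ u})

/-- `∼^{L,c,q}_∃` : `c`-graded `L`-turn bisimilarity with global counting bounded by `q`. -/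
def bisimQ (d c L q : ℕ) (G₁ G₂ : FGraph d) (v₁ : G₁.V) (v₂ : G₂.V) : Prop :=
  bisim d c L G₁ G₂ v₁ v₂ ∧
  (∀ u : G₁.V,
    min (Set.ncard {u₁ : G₁.V | bisim d c L G₁ G₁ u₁ u}) q =
      min (Set.ncard {u₂ : G₂.V | bisim d c L G₂ G₁ u₂ u}) q) ∧
  (∀ u : G₂.V,
    min (Set.ncard {u₁ : G₁.V | bisim d c L G₁ G₂ u₁ u}) q =
      min (Set.ncard {u₂ : G₂.V | bisim d c L G₂ G₂ u₂ u}) q)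
/-- The `c`-restriction of a multiset: every multiplicity is capped at `c`. -/
noncomputable def mcap {α : Type*} (c : ℕ) (M : Multiset α) : Multiset α :=
  letI := Classical.decEq α
  M.toFinset.val.bind fun x => Multiset.replicate (min (M.count x) c) x

/-- A function on finite multisets is `c`-bounded if it only depends on the
`c`-restriction of its argument. -/
def CBounded {α β : Type*} (c : ℕ) (F : Multiset α → β) : Prop :=
  ∀ M : Multiset α, F M = F (mcap c M)

/-- An `L`-layer aggregate-combine-readout GNN with input dimension `d`. -/
structure ACRGNN (d L : ℕ) where
  dims : ℕ → ℕ
  dims_zero : dims 0 = d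
  agg : (i : ℕ) → Multiset (Fin (dims i) → ℝ) → (Fin (dims i) → ℝ)
  read : (i : ℕ) → Multiset (Fin (dims i) → ℝ) → (Fin (dims i) → ℝ)
  comb : (i : ℕ) → (Fin (dims i) → ℝ) → (Fin (dims i) → ℝ) → (Fin (dims i) → ℝ) →
    (Fin (dims (i + 1)) → ℝ)
  cls : (Fin (dims L) → ℝ) → Bool

open Classical in
/-- The feature embeddings computed layer by layer by an ACR-GNN on a `d`-featured graph. -/
noncomputable def ACRGNN.emb {d L : ℕ} (N : ACRGNN d L) (G : FGraph d) :
    (i : ℕ) → G.V → (Fin (N.dims i) → ℝ)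
  | 0 => fun v j => if G.f v (Fin.cast N.dims_zero j) then 1 else 0
  | i + 1 => fun v =>
      N.comb i (N.emb G i v)
        (N.agg i ((Finset.univ.filter (fun u => G.E v u)).val.map (N.emb G i)))
        (N.read i (Finset.univ.val.map (N.emb G i)))

/-- Acceptance of a pointed featured graph by an ACR-GNN. -/
noncomputable def ACRGNN.accepts {d L : ℕ} (N : ACRGNN d L) (G : FGraph d) (v : G.V) : Bool :=
  N.cls (N.emb G L v)

/-- Dimension-wise multiset sum. -/
def sumAgg (n : ℕ) : Multiset (Fin n → ℝ) → (Fin n → ℝ) :=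
  fun M j => (M.map fun x => x j).sum

/-- A simple ACR-GNN: sum aggregation and readout, combination functions of the form
`ReLU(x₁A + x₂C + x₃R + b)`, and a linear threshold classifier on `ℝ`. -/
def ACRGNN.IsSimple {d L : ℕ} (N : ACRGNN d L) : Prop :=
  (∀ i, N.agg i = sumAgg (N.dims i)) ∧
  (∀ i, N.read i = sumAgg (N.dims i)) ∧
  (∀ i, ∃ (A C R : Matrix (Fin (N.dims i)) (Fin (N.dims (i + 1))) ℝ)
      (b : Fin (N.dims (i + 1)) → ℝ),
      ∀ x₁ x₂ x₃ j, N.comb i x₁ x₂ x₃ j =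
        max 0 (Matrix.vecMul x₁ A j + Matrix.vecMul x₂ C j + Matrix.vecMul x₃ R j + b j)) ∧
  N.dims L = 1 ∧
  ∃ (a : Fin (N.dims L) → ℝ) (t : ℝ), ∀ x, N.cls x = decide (0 ≤ ∑ j, a j * x j + t)
/-!
Write `d v` for the out-degree of `v`, `m = ∑ v, d v` for the number of edges and
`T = ∑ v, ∑ u ∈ N(v), d u` for the number of walks of length two. A relation on `n` points is a
strict linear order iff `m = 0 + 1 + ⋯ + (n - 1)` and `T = ∑_{j < n} (0 + 1 + ⋯ + (j - 1))`.
For a strict linear order the out-degrees are `0, …, n - 1` and every vertex points exactly to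
the vertices of smaller out-degree. Conversely, sort the out-degrees as `a₀ ≤ ⋯ ≤ a_{n-1}`: the
`d w` out-neighbours of `w` have out-degrees summing to at least `a₀ + ⋯ + a_{d w - 1}`, and the
convexity of these partial sums gives `T ≥ ∑_{j < n} (0 + ⋯ + (j - 1)) + ∑ j, (a_j - j)²` once
`∑ a_j = ∑ j`. Equality forces `a_j = j`, and then each vertex points exactly to the vertices of
smaller out-degree.

The network computes `d v`, the sums over out-neighbours and (by readout) `n`, `m`, `T`, `n²`,
`n³`, hence the two defects `2m - n² + n` and `6T + 3n² - n³ - 2n`; splitting each into its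
positive and negative parts with ReLU, the last layer outputs the sum of their absolute values,
which the classifier compares with `0`.
-/

open Finset Function

namespace Finset

variable {ι M : Type*} [AddCommMonoid M] [LinearOrder M] [IsOrderedCancelAddMonoid M]
  {f : ι → M} {s t : Finset ι}

theorem sum_le_sum_of_card_eq_of_forall_le (hst : #s = #t)
    (h : ∀ x ∈ s, ∀ y ∈ t, f x ≤ f y) : ∑ x ∈ s, f x ≤ ∑ y ∈ t, f y := by
  obtain rfl | ht := t.eq_empty_or_nonempty
  · simp_all
  obtain ⟨y₀, hy₀, hmin⟩ := t.exists_min_image f ht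
  calc ∑ x ∈ s, f x ≤ #s • f y₀ := sum_le_card_nsmul _ _ _ fun x hx => h x hx y₀ hy₀
    _ = #t • f y₀ := by rw [hst]
    _ ≤ ∑ y ∈ t, f y := card_nsmul_le_sum _ _ _ hmin

theorem sum_lt_sum_of_card_eq_of_forall_lt (hst : #s = #t) (hs : s.Nonempty)
    (h : ∀ x ∈ s, ∀ y ∈ t, f x < f y) : ∑ x ∈ s, f x < ∑ y ∈ t, f y := by
  obtain ⟨y₀, hy₀, hmin⟩ := t.exists_min_image f (card_pos.mp (hst ▸ hs.card_pos))
  calc ∑ x ∈ s, f x < ∑ _x ∈ s, f y₀ := sum_lt_sum_of_nonempty hs fun x hx => h x hx y₀ hy₀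
    _ = #t • f y₀ := by rw [sum_const, hst]
    _ ≤ ∑ y ∈ t, f y := card_nsmul_le_sum _ _ _ hmin

variable [DecidableEq ι]

theorem card_sdiff_eq_card_sdiff_of_card_eq (hst : #s = #t) : #(s \ t) = #(t \ s) := by
  have := card_sdiff_add_card_inter s t
  have := card_sdiff_add_card_inter t s
  rw [inter_comm] at this
  omega

theorem sum_le_sum_of_card_eq_of_forall_sdiff_le (hst : #s = #t)
    (h : ∀ x ∈ s \ t, ∀ y ∈ t \ s, f x ≤ f y) : ∑ x ∈ s, f x ≤ ∑ y ∈ t, f y :=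
  sum_sdiff_le_sum_sdiff.mp <|
    sum_le_sum_of_card_eq_of_forall_le (card_sdiff_eq_card_sdiff_of_card_eq hst) h

theorem sum_lt_sum_of_card_eq_of_forall_sdiff_lt (hst : #s = #t) (hne : s ≠ t)
    (h : ∀ x ∈ s \ t, ∀ y ∈ t \ s, f x < f y) : ∑ x ∈ s, f x < ∑ y ∈ t, f y := by
  refine sum_sdiff_lt_sum_sdiff.mp <|
    sum_lt_sum_of_card_eq_of_forall_lt (card_sdiff_eq_card_sdiff_of_card_eq hst) ?_ h
  exact sdiff_nonempty.mpr fun hsub => hne (eq_of_subset_of_card_le hsub hst.ge)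

end Finset

theorem exists_equiv_fin_monotone {V α : Type*} [Fintype V] [LinearOrder α] (f : V → α) :
    ∃ r : V ≃ Fin (Fintype.card V), Monotone (f ∘ r.symm) := by
  let e := Fintype.equivFin V
  exact ⟨e.trans (Tuple.sort (f ∘ e.symm)).symm, Tuple.monotone_sort (f ∘ e.symm)⟩

section EquivFin

variable {V M : Type*} [Fintype V] [AddCommMonoid M] {n : ℕ}

theorem Equiv.sum_comp_val_eq_sum_range (r : V ≃ Fin n) (g : ℕ → M) :
    ∑ u, g (r u) = ∑ i ∈ range n, g i :=
  (r.sum_comp (g ∘ Fin.val)).trans (Fin.sum_univ_eq_sum_range g n)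

theorem Equiv.sum_filter_val_lt_eq_sum_range (r : V ≃ Fin n) (g : ℕ → M) {k : ℕ} (hk : k ≤ n) :
    ∑ u ∈ univ.filter (fun u => (r u : ℕ) < k), g (r u) = ∑ i ∈ range k, g i := by
  rw [sum_filter, r.sum_comp_val_eq_sum_range (fun i => if i < k then g i else 0), ← sum_filter]
  congr 1
  ext i
  simp only [mem_filter, mem_range]
  omega

theorem Equiv.card_filter_val_lt (r : V ≃ Fin n) {k : ℕ} (hk : k ≤ n) :
    #(univ.filter fun u => (r u : ℕ) < k) = k := by
  rw [card_eq_sum_ones, r.sum_filter_val_lt_eq_sum_range (fun _ => 1) hk, sum_const, card_range,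
    smul_eq_mul, mul_one]

end EquivFin

theorem Monotone.sum_range_add_sub_mul_le {R : Type*} [CommRing R] [LinearOrder R]
    [IsStrictOrderedRing R] {a : ℕ → R} (ha : Monotone a) (j k : ℕ) :
    ∑ i ∈ range j, a i + (k - j) * a j ≤ ∑ i ∈ range k, a i := by
  rcases le_total j k with hjk | hkj
  · have hIco : #(Ico j k) • a j ≤ ∑ i ∈ Ico j k, a i :=
      card_nsmul_le_sum _ _ _ fun i hi => ha (mem_Ico.mp hi).1
    rw [Nat.card_Ico, nsmul_eq_mul, Nat.cast_sub hjk] at hIco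
    rw [← sum_range_add_sum_Ico _ hjk]
    linarith
  · have hIco : ∑ i ∈ Ico k j, a i ≤ #(Ico k j) • a j :=
      sum_le_card_nsmul _ _ _ fun i hi => ha (mem_Ico.mp hi).2.le
    rw [Nat.card_Ico, nsmul_eq_mul, Nat.cast_sub hkj] at hIco
    rw [← sum_range_add_sum_Ico _ hkj]
    linarith

theorem sum_range_sum_range_add_mul {R : Type*} [CommRing R] (b : ℕ → R) (n : ℕ) :
    ∑ j ∈ range n, (∑ i ∈ range j, b i + j * b j) = (n - 1) * ∑ j ∈ range n, b j := by
  induction n with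
  | zero => simp
  | succ n ih => rw [sum_range_succ, ih, sum_range_succ]; push_cast; ring

theorem Monotone.sum_range_sum_range_add_sum_sq_le {a : ℕ → ℕ} (ha : Monotone a) {n : ℕ}
    (hsum : ∑ j ∈ range n, a j = ∑ j ∈ range n, j) :
    ∑ j ∈ range n, ∑ i ∈ range j, (i : ℤ) + ∑ j ∈ range n, ((a j : ℤ) - j) ^ 2
      ≤ ∑ j ∈ range n, ∑ i ∈ range (a j), (a i : ℤ) := by
  have hdev : ∑ j ∈ range n, ((a j : ℤ) - j) = 0 := by
    rw [sum_sub_distrib, ← Nat.cast_sum, ← Nat.cast_sum, hsum, sub_self]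
  calc ∑ j ∈ range n, ∑ i ∈ range j, (i : ℤ) + ∑ j ∈ range n, ((a j : ℤ) - j) ^ 2
      = ∑ j ∈ range n, (∑ i ∈ range j, (a i : ℤ) + ((a j : ℤ) - j) * a j)
          - ∑ j ∈ range n, (∑ i ∈ range j, ((a i : ℤ) - i) + j * ((a j : ℤ) - j)) := by
        rw [← sum_add_distrib, ← sum_sub_distrib]
        refine sum_congr rfl fun j _ => ?_
        rw [sum_sub_distrib]
        ring
    _ = ∑ j ∈ range n, (∑ i ∈ range j, (a i : ℤ) + ((a j : ℤ) - j) * a j) := by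
        rw [sum_range_sum_range_add_mul, hdev, mul_zero, sub_zero]
    _ ≤ ∑ j ∈ range n, ∑ i ∈ range (a j), (a i : ℤ) :=
        sum_le_sum fun j _ =>
          Monotone.sum_range_add_sub_mul_le (fun _ _ h => Nat.cast_le.mpr (ha h)) j (a j)

theorem two_mul_sum_range_cast {R : Type*} [CommRing R] (n : ℕ) :
    2 * ∑ j ∈ range n, (j : R) = n ^ 2 - n := by
  induction n with
  | zero => simp
  | succ n ih => rw [sum_range_succ, mul_add, ih]; push_cast; ring

theorem six_mul_sum_range_sum_range_cast {R : Type*} [CommRing R] (n : ℕ) :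
    6 * ∑ j ∈ range n, ∑ i ∈ range j, (i : R) = n ^ 3 - 3 * n ^ 2 + 2 * n := by
  induction n with
  | zero => simp
  | succ n ih =>
    rw [sum_range_succ, mul_add, ih, show 6 * ∑ i ∈ range n, (i : R) = 3 * (n ^ 2 - n) by
      rw [← two_mul_sum_range_cast]; ring]
    push_cast
    ring

section Digraph

variable {V : Type} [Fintype V] (E : V → V → Prop) [DecidableRel E]

def outNbrs (v : V) : Finset V := univ.filter (E v)

def outdeg (v : V) : ℕ := #(outNbrs E v)

def numEdges : ℕ := ∑ v, outdeg E v

def numTwoWalks : ℕ := ∑ v, ∑ u ∈ outNbrs E v, outdeg E u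

variable {E}

@[simp] theorem mem_outNbrs {v u : V} : u ∈ outNbrs E v ↔ E v u := by
  simp [outNbrs]

theorem outdeg_le_card (v : V) : outdeg E v ≤ Fintype.card V := card_le_univ _

theorem isSLO_iff_outdeg :
    IsSLO E ↔ Injective (outdeg E) ∧ ∀ v u, E v u ↔ outdeg E u < outdeg E v := by
  constructor
  · rintro ⟨hirrefl, htrans, htotal⟩
    have hlt : ∀ v u, E v u → outdeg E u < outdeg E v := fun v u hvu =>
      card_lt_card ⟨fun w hw => by simp only [mem_outNbrs] at hw ⊢; exact htrans _ _ _ hvu hw,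
        fun hsub => hirrefl u (mem_outNbrs.mp (hsub (mem_outNbrs.mpr hvu)))⟩
    refine ⟨fun u v huv => ?_, fun v u => ⟨hlt v u, fun hd => ?_⟩⟩
    · by_contra hne
      rcases htotal u v hne with h' | h' <;> have := hlt _ _ h' <;> omega
    · rcases htotal u v (by rintro rfl; exact lt_irrefl _ hd) with h' | h'
      · exact absurd (hlt u v h') hd.not_gt
      · exact h'
  · rintro ⟨hinj, hE⟩
    refine ⟨fun v => by simp [hE], fun u v w => by simp only [hE]; exact fun h₁ h₂ => h₂.trans h₁,
      fun u v huv => ?_⟩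
    simp only [hE]
    exact (hinj.ne huv).symm.lt_or_gt

theorem exists_equiv_outdeg_of_isSLO (h : IsSLO E) :
    ∃ e : V ≃ Fin (Fintype.card V), ∀ u, (e u : ℕ) = outdeg E u := by
  obtain ⟨hinj, hE⟩ := isSLO_iff_outdeg.mp h
  have hlt : ∀ v, outdeg E v < Fintype.card V := fun v =>
    card_lt_univ_of_notMem (x := v) (by simp [hE])
  refine ⟨Equiv.ofBijective (fun v => ⟨outdeg E v, hlt v⟩) ?_, fun _ => rfl⟩
  rw [Fintype.bijective_iff_injective_and_card, Fintype.card_fin]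
  exact ⟨fun u v huv => hinj (Fin.val_eq_of_eq huv), rfl⟩

theorem numEdges_eq_of_outdeg_equiv (e : V ≃ Fin (Fintype.card V))
    (he : ∀ u, (e u : ℕ) = outdeg E u) : numEdges E = ∑ j ∈ range (Fintype.card V), j := by
  simp only [numEdges, ← he]
  exact e.sum_comp_val_eq_sum_range id

theorem numTwoWalks_eq_iff_of_outdeg_equiv (e : V ≃ Fin (Fintype.card V))
    (he : ∀ u, (e u : ℕ) = outdeg E u) :
    numTwoWalks E = ∑ j ∈ range (Fintype.card V), ∑ i ∈ range j, i ↔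
      ∀ v u, E v u ↔ outdeg E u < outdeg E v := by
  classical
  let lower (v : V) : Finset V := univ.filter fun u => outdeg E u < outdeg E v
  have hlower : ∀ v, ∑ u ∈ lower v, outdeg E u = ∑ i ∈ range (outdeg E v), i := by
    intro v
    simp only [lower, ← he]
    exact e.sum_filter_val_lt_eq_sum_range id (e v).isLt.le
  have hcard : ∀ v, #(lower v) = #(outNbrs E v) := by
    intro v
    simp only [lower, ← he, e.card_filter_val_lt (e v).isLt.le]
    exact he v
  have hexchange : ∀ v, lower v = outNbrs E v ∨
      ∑ u ∈ lower v, outdeg E u < ∑ u ∈ outNbrs E v, outdeg E u := by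
    refine fun v => or_iff_not_imp_left.mpr fun hne => ?_
    refine sum_lt_sum_of_card_eq_of_forall_sdiff_lt (hcard v) hne fun x hx y hy => ?_
    simp only [lower, mem_sdiff, mem_filter, mem_univ, true_and, mem_outNbrs] at hx hy
    omega
  have htarget : ∑ j ∈ range (Fintype.card V), ∑ i ∈ range j, i =
      ∑ v, ∑ u ∈ lower v, outdeg E u := by
    rw [← e.sum_comp_val_eq_sum_range]
    exact sum_congr rfl fun v _ => by rw [hlower, he]
  rw [htarget, numTwoWalks, eq_comm, sum_eq_sum_iff_of_le fun v _ => ?_]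
  · refine ⟨fun h v u => ?_, fun h v _ => by congr 1; ext u; simp [lower, h]⟩
    have hv := (hexchange v).resolve_right (h v (mem_univ v)).not_lt
    rw [← mem_outNbrs (E := E), ← hv]
    simp [lower]
  · exact (hexchange v).elim (fun h => h ▸ le_rfl) le_of_lt

end Digraph

section Rank

variable {V : Type} [Fintype V] {E : V → V → Prop} [DecidableRel E]

theorem sum_range_sum_range_le_numTwoWalks (r : V ≃ Fin (Fintype.card V)) {a : ℕ → ℕ}
    (ha : Monotone a) (hda : ∀ u, outdeg E u = a (r u)) :
    ∑ j ∈ range (Fintype.card V), ∑ i ∈ range (a j), a i ≤ numTwoWalks E := by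
  classical
  rw [← r.sum_comp_val_eq_sum_range, numTwoWalks]
  refine sum_le_sum fun w _ => ?_
  rw [← hda w, ← r.sum_filter_val_lt_eq_sum_range a (outdeg_le_card w)]
  simp only [← hda]
  refine sum_le_sum_of_card_eq_of_forall_sdiff_le ?_ fun x hx y hy => ?_
  · rw [r.card_filter_val_lt (outdeg_le_card w)]
    rfl
  · simp only [mem_sdiff, mem_filter, mem_univ, true_and, mem_outNbrs] at hx hy
    rw [hda, hda]
    exact ha (by omega)

theorem exists_equiv_outdeg_of_numEdges_of_numTwoWalks_le
    (hm : numEdges E = ∑ j ∈ range (Fintype.card V), j)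
    (hT : numTwoWalks E ≤ ∑ j ∈ range (Fintype.card V), ∑ i ∈ range j, i) :
    ∃ e : V ≃ Fin (Fintype.card V), ∀ u, (e u : ℕ) = outdeg E u := by
  set n := Fintype.card V
  obtain ⟨r, hr⟩ := exists_equiv_fin_monotone (outdeg E)
  -- padding with `n` keeps `a` monotone, since out-degrees are at most `n`
  let a (i : ℕ) : ℕ := if h : i < n then outdeg E (r.symm ⟨i, h⟩) else n
  have hda : ∀ u, outdeg E u = a (r u) := fun u => by
    simp only [a]
    rw [dif_pos (r u).isLt, Fin.eta, Equiv.symm_apply_apply]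
  have ha : Monotone a := by
    intro i j hij
    simp only [a]
    split_ifs with hi hj hj
    · exact hr (show (⟨i, hi⟩ : Fin n) ≤ ⟨j, hj⟩ from hij)
    · exact outdeg_le_card _
    · omega
    · rfl
  have hsum : ∑ j ∈ range n, a j = ∑ j ∈ range n, j := by
    rw [← hm, numEdges, ← r.sum_comp_val_eq_sum_range]
    simp only [hda]
  have hsq : ∑ j ∈ range n, ((a j : ℤ) - j) ^ 2 ≤ 0 := by
    have hlow := ha.sum_range_sum_range_add_sum_sq_le hsum
    have hup := (sum_range_sum_range_le_numTwoWalks r ha hda).trans hT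
    linarith
  have haj : ∀ j < n, a j = j := fun j hj => by
    have := (sum_eq_zero_iff_of_nonneg fun _ _ => sq_nonneg _).mp
      (hsq.antisymm (sum_nonneg fun _ _ => sq_nonneg _)) j (mem_range.mpr hj)
    rw [sq_eq_zero_iff, sub_eq_zero] at this
    exact_mod_cast this
  exact ⟨r, fun u => by rw [hda, haj _ (r u).isLt]⟩

end Rank

theorem isSLO_iff_numEdges_numTwoWalks {V : Type} [Fintype V] {E : V → V → Prop}
    [DecidableRel E] :
    IsSLO E ↔ numEdges E = ∑ j ∈ range (Fintype.card V), j ∧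
      numTwoWalks E = ∑ j ∈ range (Fintype.card V), ∑ i ∈ range j, i := by
  constructor
  · intro h
    obtain ⟨e, he⟩ := exists_equiv_outdeg_of_isSLO h
    exact ⟨numEdges_eq_of_outdeg_equiv e he,
      (numTwoWalks_eq_iff_of_outdeg_equiv e he).mpr (isSLO_iff_outdeg.mp h).2⟩
  · rintro ⟨hm, hT⟩
    obtain ⟨e, he⟩ := exists_equiv_outdeg_of_numEdges_of_numTwoWalks_le hm hT.le
    refine isSLO_iff_outdeg.mpr ⟨fun u v huv => e.injective (Fin.ext ?_),
      (numTwoWalks_eq_iff_of_outdeg_equiv e he).mp hT⟩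
    rw [he, he, huv]

theorem sumAgg_map_val {α : Type*} {n : ℕ} (s : Finset α) (g : α → Fin n → ℝ) :
    sumAgg n (s.val.map g) = ∑ u ∈ s, g u := by
  funext j
  simp only [sumAgg, Multiset.map_map, Finset.sum_apply]
  rfl

namespace ACRGNN

variable {d L : ℕ}

-- Reducible, so that the layer widths of a concrete network unfold (e.g. for `fin_cases`).
noncomputable abbrev ofMatrices (dims : ℕ → ℕ) (h0 : dims 0 = d)
    (A C R : ∀ i, Matrix (Fin (dims i)) (Fin (dims (i + 1))) ℝ) (b : ∀ i, Fin (dims (i + 1)) → ℝ)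
    (a : Fin (dims L) → ℝ) (t : ℝ) : ACRGNN d L where
  dims := dims
  dims_zero := h0
  agg i := sumAgg (dims i)
  read i := sumAgg (dims i)
  comb i x₁ x₂ x₃ j :=
    max 0 (Matrix.vecMul x₁ (A i) j + Matrix.vecMul x₂ (C i) j + Matrix.vecMul x₃ (R i) j + b i j)
  cls x := decide (0 ≤ ∑ j, a j * x j + t)

variable {dims : ℕ → ℕ} {h0 : dims 0 = d}
  {A C R : ∀ i, Matrix (Fin (dims i)) (Fin (dims (i + 1))) ℝ} {b : ∀ i, Fin (dims (i + 1)) → ℝ}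
  {a : Fin (dims L) → ℝ} {t : ℝ}

theorem isSimple_ofMatrices (hL : dims L = 1) : (ofMatrices dims h0 A C R b a t).IsSimple :=
  ⟨fun _ => rfl, fun _ => rfl, fun i => ⟨A i, C i, R i, b i, fun _ _ _ _ => rfl⟩, hL,
    ⟨a, t, fun _ => rfl⟩⟩

open Classical in
theorem emb_ofMatrices_succ (G : FGraph d) (i : ℕ) (v : G.V) (j : Fin (dims (i + 1))) :
    (ofMatrices dims h0 A C R b a t).emb G (i + 1) v j =
      max 0 (Matrix.vecMul ((ofMatrices dims h0 A C R b a t).emb G i v) (A i) j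
        + Matrix.vecMul (∑ u ∈ outNbrs G.E v, (ofMatrices dims h0 A C R b a t).emb G i u) (C i) j
        + Matrix.vecMul (∑ u, (ofMatrices dims h0 A C R b a t).emb G i u) (R i) j + b i j) := by
  simp only [emb, ofMatrices, sumAgg_map_val]
  rfl

theorem accepts_ofMatrices (G : FGraph d) (v : G.V) :
    (ofMatrices dims h0 A C R b a t).accepts G v =
      decide (0 ≤ ∑ j, a j * (ofMatrices dims h0 A C R b a t).emb G L v j + t) := rfl

end ACRGNN

namespace SLONet

abbrev dims : ℕ → ℕ
  | 0 => 0 | 1 => 1 | 2 => 2 | 3 => 3 | 4 => 5 | 5 => 4 | _ => 1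

@[simp] noncomputable def A : ∀ i, Matrix (Fin (dims i)) (Fin (dims (i + 1))) ℝ
  | 1 => !![1, 0]
  | 3 => !![0, 0, 0, 0, 0; 1, 0, 0, 1, -1; 0, 0, 0, 2, -2]
  | 4 => !![0, 0, -2, 2; 0, 0, 3, -3; 0, 0, 6, -6; 1, 0, 0, 0; 0, 1, 0, 0]
  | 5 => !![1; 1; 1; 1]
  | _ => 0

@[simp] noncomputable def C : ∀ i, Matrix (Fin (dims i)) (Fin (dims (i + 1))) ℝ
  | 1 => !![0, 1]
  | 2 => !![0, 0, 0; 1, 0, 0]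
  | _ => 0

@[simp] noncomputable def R : ∀ i, Matrix (Fin (dims i)) (Fin (dims (i + 1))) ℝ
  | 2 => !![0, 1, 0; 0, 0, 1]
  | 3 => !![0, 0, 1, 0, 0; 0, 1, 0, -1, 1; 0, 0, 0, 0, 0]
  | 4 => !![0, 0, 0, 0; 0, 0, -1, 1; 0, 0, 0, 0; 0, 0, 0, 0; 0, 0, 0, 0]
  | _ => 0

@[simp] noncomputable def b : ∀ i, Fin (dims (i + 1)) → ℝ
  | 0 => ![1]
  | _ => 0

noncomputable abbrev net : ACRGNN 0 6 := .ofMatrices dims rfl A C R b ![-1] 0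

/- `Fin (dims k)` is not syntactically of the form `Fin (n + 1)`, so `Fin.sum_univ_succ` needs
these to fire. -/
@[simp] theorem sum_dims_two (f : Fin (dims 2) → ℝ) : ∑ i, f i = ∑ i : Fin 2, f i := rfl
@[simp] theorem sum_dims_three (f : Fin (dims 3) → ℝ) : ∑ i, f i = ∑ i : Fin 3, f i := rfl
@[simp] theorem sum_dims_four (f : Fin (dims 4) → ℝ) : ∑ i, f i = ∑ i : Fin 5, f i := rfl
@[simp] theorem sum_dims_five (f : Fin (dims 5) → ℝ) : ∑ i, f i = ∑ i : Fin 4, f i := rfl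
@[simp] theorem sum_dims_six (f : Fin (dims 6) → ℝ) : ∑ i, f i = ∑ i : Fin 1, f i := rfl

open Classical

variable (G : FGraph 0)

noncomputable def card : ℝ := Fintype.card G.V

noncomputable def edgeDefect : ℝ := 2 * numEdges G.E - card G ^ 2 + card G

noncomputable def walkDefect : ℝ :=
  6 * numTwoWalks G.E + 3 * card G ^ 2 - card G ^ 3 - 2 * card G

theorem emb_one : net.emb G 1 = fun _ => ![1] := by
  funext v j
  rw [ACRGNN.emb_ofMatrices_succ]
  fin_cases j
  simp

theorem emb_two : net.emb G 2 = fun v => ![1, (outdeg G.E v : ℝ)] := by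
  funext v j
  rw [ACRGNN.emb_ofMatrices_succ, emb_one]
  fin_cases j <;> simp [dims, Matrix.vecMul, dotProduct, outdeg]

theorem emb_three : net.emb G 3 = fun v =>
    ![((∑ u ∈ outNbrs G.E v, outdeg G.E u : ℕ) : ℝ), card G, numEdges G.E] := by
  funext v j
  rw [ACRGNN.emb_ofMatrices_succ, emb_two]
  fin_cases j <;> simp [Matrix.vecMul, dotProduct, Fin.sum_univ_succ, card, numEdges] <;>
    positivity

theorem emb_four : net.emb G 4 = fun _ =>
    ![card G, card G ^ 2, numTwoWalks G.E, max 0 (edgeDefect G), max 0 (-edgeDefect G)] := by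
  funext v j
  rw [ACRGNN.emb_ofMatrices_succ, emb_three]
  fin_cases j <;>
    simp [Matrix.vecMul, dotProduct, Fin.sum_univ_succ, card, numTwoWalks, edgeDefect, sq] <;>
    first | positivity | (congr 1; ring)

theorem emb_five : net.emb G 5 = fun _ =>
    ![max 0 (edgeDefect G), max 0 (-edgeDefect G), max 0 (walkDefect G),
      max 0 (-walkDefect G)] := by
  funext v j
  rw [ACRGNN.emb_ofMatrices_succ, emb_four]
  fin_cases j <;> simp [Matrix.vecMul, dotProduct, Fin.sum_univ_succ, card, walkDefect] <;>
    congr 1 <;> ring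

theorem emb_six : net.emb G 6 = fun _ => ![|edgeDefect G| + |walkDefect G|] := by
  have habs (x : ℝ) : max 0 x + max 0 (-x) = |x| := by
    rw [max_comm, max_comm 0, max_zero_add_max_neg_zero_eq_abs_self]
  funext v j
  rw [ACRGNN.emb_ofMatrices_succ, emb_five]
  fin_cases j
  simp [Matrix.vecMul, dotProduct, Fin.sum_univ_succ, ← habs, add_assoc]
  positivity

theorem accepts_iff (v : G.V) :
    net.accepts G v = true ↔ edgeDefect G = 0 ∧ walkDefect G = 0 := by
  rw [ACRGNN.accepts_ofMatrices, emb_six]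
  have h₁ := abs_nonneg (edgeDefect G)
  have h₂ := abs_nonneg (walkDefect G)
  simp only [sum_dims_six, Fin.sum_univ_one, Matrix.cons_val_zero, decide_eq_true_eq]
  constructor
  · intro h
    exact ⟨abs_eq_zero.mp (by linarith), abs_eq_zero.mp (by linarith)⟩
  · rintro ⟨he, hw⟩
    simp [he, hw]

theorem edgeDefect_eq_zero_iff :
    edgeDefect G = 0 ↔ numEdges G.E = ∑ j ∈ range (Fintype.card G.V), j := by
  rw [edgeDefect, card, ← @Nat.cast_inj ℝ]
  have := two_mul_sum_range_cast (R := ℝ) (Fintype.card G.V)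
  push_cast
  constructor <;> intro h <;> linarith

theorem walkDefect_eq_zero_iff :
    walkDefect G = 0 ↔
      numTwoWalks G.E = ∑ j ∈ range (Fintype.card G.V), ∑ i ∈ range j, i := by
  rw [walkDefect, card, ← @Nat.cast_inj ℝ]
  have := six_mul_sum_range_sum_range_cast (R := ℝ) (Fintype.card G.V)
  push_cast
  constructor <;> intro h <;> linarith

end SLONet

/-- There is a simple 6-layer ACR-GNN with input dimension 0 that
accepts a pointed `0`-featured directed graph `(G, v)` iff `G` is a strict
linear order. -/
theorem stmt6 :
    ∃ N : ACRGNN 0 6, N.IsSimple ∧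
      ∀ (G : FGraph 0) (v : G.V), N.accepts G v = true ↔ IsSLO G.E := by
  classical
  refine ⟨SLONet.net, ACRGNN.isSimple_ofMatrices rfl, fun G v => ?_⟩
  rw [SLONet.accepts_iff, SLONet.edgeDefect_eq_zero_iff, SLONet.walkDefect_eq_zero_iff,
    isSLO_iff_numEdges_numTwoWalks]
end

section
/- Suppose G₁, v₁ ∼^{L,c,*}_∃ G₂, v₂ for pointed d-featured graphs (G₁, v₁) and (G₂, v₂). Then for every L-layer ACR-GNN N with input dimension d and c-bounded aggregation functions, N(G₁, v₁) = N(G₂, v₂). -/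
/-!
By induction on `i ≤ L`, vertices of `G₁` and `G₂` that are `i`-bisimilar receive equal
layer-`i` embeddings. The aggregated term agrees because a `c`-bounded aggregation only sees
the neighbour multiset with multiplicities capped at `c`, and those capped counts are exactly
what the graded forth and back conditions transfer. The readout term agrees because the
multisets of all layer-`i` embeddings of `G₁` and of `G₂` coincide: these embeddings are
constant on the `L`-bisimilarity classes of the disjoint union of the vertex sets, and the
global counting condition says that each class has as many vertices in `G₁` as in `G₂`.
-/

section Bisimilarity

variable {d c : ℕ}

theorem bisim_refl : ∀ (L : ℕ) (G : FGraph d) (v : G.V), bisim d c L G G v v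
  | 0, _, _ => rfl
  | L + 1, _, _ =>
    ⟨rfl, fun _ _ u hu hE => ⟨u, hu, hE, fun i => bisim_refl L _ (u i)⟩,
      fun _ _ u hu hE => ⟨u, hu, hE, fun i => bisim_refl L _ (u i)⟩⟩

theorem bisim_symm : ∀ {L : ℕ} {G₁ G₂ : FGraph d} {v₁ : G₁.V} {v₂ : G₂.V},
    bisim d c L G₁ G₂ v₁ v₂ → bisim d c L G₂ G₁ v₂ v₁
  | 0, _, _, _, _, h => Eq.symm h
  | _ + 1, _, _, _, _, ⟨hf, hforth, hback⟩ =>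
    ⟨hf.symm,
      fun k hk u hu hE =>
        let ⟨u', hu', hE', hb⟩ := hback k hk u hu hE
        ⟨u', hu', hE', fun i => bisim_symm (hb i)⟩,
      fun k hk u hu hE =>
        let ⟨u', hu', hE', hb⟩ := hforth k hk u hu hE
        ⟨u', hu', hE', fun i => bisim_symm (hb i)⟩⟩

theorem bisim_trans : ∀ {L : ℕ} {G₁ G₂ G₃ : FGraph d} {v₁ : G₁.V} {v₂ : G₂.V} {v₃ : G₃.V},
    bisim d c L G₁ G₂ v₁ v₂ → bisim d c L G₂ G₃ v₂ v₃ → bisim d c L G₁ G₃ v₁ v₃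
  | 0, _, _, _, _, _, _, h₁₂, h₂₃ => Eq.trans h₁₂ h₂₃
  | _ + 1, _, _, _, _, _, _, ⟨hf, hforth, hback⟩, ⟨hf', hforth', hback'⟩ =>
    ⟨hf.trans hf',
      fun k hk u₁ hu₁ hE₁ =>
        let ⟨u₂, hu₂, hE₂, hb⟩ := hforth k hk u₁ hu₁ hE₁
        let ⟨u₃, hu₃, hE₃, hb'⟩ := hforth' k hk u₂ hu₂ hE₂
        ⟨u₃, hu₃, hE₃, fun i => bisim_trans (hb i) (hb' i)⟩,
      fun k hk u₃ hu₃ hE₃ =>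
        let ⟨u₂, hu₂, hE₂, hb'⟩ := hback' k hk u₃ hu₃ hE₃
        let ⟨u₁, hu₁, hE₁, hb⟩ := hback k hk u₂ hu₂ hE₂
        ⟨u₁, hu₁, hE₁, fun i => bisim_trans (hb i) (hb' i)⟩⟩

theorem bisim_of_bisim_succ : ∀ {L : ℕ} {G₁ G₂ : FGraph d} {v₁ : G₁.V} {v₂ : G₂.V},
    bisim d c (L + 1) G₁ G₂ v₁ v₂ → bisim d c L G₁ G₂ v₁ v₂
  | 0, _, _, _, _, h => h.1
  | _ + 1, _, _, _, _, ⟨hf, hforth, hback⟩ =>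
    ⟨hf,
      fun k hk u hu hE =>
        let ⟨u', hu', hE', hb⟩ := hforth k hk u hu hE
        ⟨u', hu', hE', fun i => bisim_of_bisim_succ (hb i)⟩,
      fun k hk u hu hE =>
        let ⟨u', hu', hE', hb⟩ := hback k hk u hu hE
        ⟨u', hu', hE', fun i => bisim_of_bisim_succ (hb i)⟩⟩

theorem bisim_of_le {i L : ℕ} (hiL : i ≤ L) {G₁ G₂ : FGraph d} {v₁ : G₁.V} {v₂ : G₂.V} :
    bisim d c L G₁ G₂ v₁ v₂ → bisim d c i G₁ G₂ v₁ v₂ := by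
  induction L, hiL using Nat.le_induction with
  | base => exact id
  | succ L _ ih => exact ih ∘ bisim_of_bisim_succ

theorem bisim.exists_injOn {i : ℕ} {G₁ G₂ : FGraph d} {v₁ : G₁.V} {v₂ : G₂.V}
    (h : bisim d c (i + 1) G₁ G₂ v₁ v₂) (s : Finset G₁.V) (hs : s.card ≤ c)
    (hE : ∀ u ∈ s, G₁.E v₁ u) :
    ∃ φ : G₁.V → G₂.V, Set.InjOn φ s ∧ ∀ u ∈ s, G₂.E v₂ (φ u) ∧ bisim d c i G₁ G₂ u (φ u) := by
  classical
  let e := s.equivFin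
  obtain ⟨u₂, hu₂, hE₂, hb⟩ := h.2.1 s.card hs (fun j => e.symm j)
    (Subtype.val_injective.comp e.symm.injective) (fun j => hE _ (e.symm j).2)
  refine ⟨fun u => if hu : u ∈ s then u₂ (e ⟨u, hu⟩) else v₂, ?_, fun u hu => ?_⟩
  · intro u hu u' hu' huu'
    rw [Finset.mem_coe] at hu hu'
    simp only [hu, hu', dite_true] at huu'
    simpa using e.injective (hu₂ huu')
  · simpa [hu] using And.intro (hE₂ (e ⟨u, hu⟩)) (hb (e ⟨u, hu⟩))

end Bisimilarity

theorem count_mcap {α : Type*} [DecidableEq α] (c : ℕ) (M : Multiset α) (y : α) :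
    (mcap c M).count y = min (M.count y) c := by
  classical
  unfold mcap
  rw [Multiset.count_bind,
    Multiset.sum_map_eq_nsmul_single y fun b hb _ => by simp [Multiset.count_replicate, hb]]
  by_cases hy : y ∈ M <;> simp [hy]
  congr

section Neighbours

variable {d c : ℕ}

open Classical in
theorem min_count_map_neighbours_le {X : Type*} {i : ℕ} {G₁ G₂ : FGraph d} {v₁ : G₁.V}
    {v₂ : G₂.V} (h : bisim d c (i + 1) G₁ G₂ v₁ v₂) (f₁ : G₁.V → X) (f₂ : G₂.V → X)
    (hf : ∀ u₁ u₂, bisim d c i G₁ G₂ u₁ u₂ → f₁ u₁ = f₂ u₂) (x : X) :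
    min (((Finset.univ.filter fun u => G₁.E v₁ u).val.map f₁).count x) c ≤
      ((Finset.univ.filter fun u => G₂.E v₂ u).val.map f₂).count x := by
  simp only [Multiset.count_map, ← Finset.filter_val, Finset.filter_filter, ← Finset.card_def]
  obtain ⟨s, hs, hcard⟩ := Finset.exists_subset_card_eq
    (min_le_left (Finset.univ.filter fun u => G₁.E v₁ u ∧ x = f₁ u).card c)
  obtain ⟨φ, hφ, hφE⟩ := h.exists_injOn s (hcard ▸ min_le_right _ c)
    fun u hu => (Finset.mem_filter.1 (hs hu)).2.1
  rw [← hcard]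
  refine Finset.card_le_card_of_injOn φ (fun u hu => ?_) hφ
  obtain ⟨hE, hx⟩ := (Finset.mem_filter.1 (hs hu)).2
  exact Finset.mem_filter.2 ⟨Finset.mem_univ _, (hφE u hu).1, hx.trans (hf _ _ (hφE u hu).2)⟩

open Classical in
theorem mcap_map_neighbours_eq {X : Type*} {i : ℕ} {G₁ G₂ : FGraph d} {v₁ : G₁.V}
    {v₂ : G₂.V} (h : bisim d c (i + 1) G₁ G₂ v₁ v₂) (f₁ : G₁.V → X) (f₂ : G₂.V → X)
    (hf : ∀ u₁ u₂, bisim d c i G₁ G₂ u₁ u₂ → f₁ u₁ = f₂ u₂) :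
    mcap c ((Finset.univ.filter fun u => G₁.E v₁ u).val.map f₁) =
      mcap c ((Finset.univ.filter fun u => G₂.E v₂ u).val.map f₂) := by
  ext x
  rw [count_mcap, count_mcap]
  have h₁₂ := min_count_map_neighbours_le h f₁ f₂ hf x
  have h₂₁ := min_count_map_neighbours_le (bisim_symm h) f₂ f₁
    (fun u₂ u₁ hu => (hf u₁ u₂ (bisim_symm hu)).symm) x
  exact le_antisymm (le_min h₁₂ (min_le_right _ _)) (le_min h₂₁ (min_le_right _ _))

end Neighbours

theorem CBounded.eq_of_mcap_eq {α β : Type*} {c : ℕ} {F : Multiset α → β} (hF : CBounded c F)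
    {M M' : Multiset α} (h : mcap c M = mcap c M') : F M = F M' := by
  rw [hF M, hF M', h]

theorem Multiset.map_univ_inl_eq_map_univ_inr {α β X : Type*} [Fintype α] [Fintype β]
    (S : Setoid (α ⊕ β))
    (hS : ∀ y, {a : α | S (.inl a) y}.ncard = {b : β | S (.inr b) y}.ncard)
    (F : α ⊕ β → X) (hF : ∀ x y, S x y → F x = F y) :
    Finset.univ.val.map (F ∘ .inl) = Finset.univ.val.map (F ∘ .inr) := by
  classical
  have hclasses : Finset.univ.val.map (fun a => Quotient.mk S (.inl a)) =
      Finset.univ.val.map (fun b => Quotient.mk S (.inr b)) := by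
    ext z
    induction z using Quotient.inductionOn with
    | h y =>
      simp only [Multiset.count_map, ← Finset.filter_val, ← Finset.card_def, Quotient.eq]
      simpa [Set.ncard_eq_toFinset_card', S.comm] using hS y
  calc Finset.univ.val.map (F ∘ .inl)
      = (Finset.univ.val.map fun a => Quotient.mk S (.inl a)).map (Quotient.lift F hF) := by
        rw [Multiset.map_map]; rfl
    _ = (Finset.univ.val.map fun b => Quotient.mk S (.inr b)).map (Quotient.lift F hF) := by
        rw [hclasses]
    _ = Finset.univ.val.map (F ∘ .inr) := by
        rw [Multiset.map_map]; rfl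

def bisimSetoid (d c L : ℕ) (G₁ G₂ : FGraph d) : Setoid (G₁.V ⊕ G₂.V) where
  r
    | .inl a, .inl a' => bisim d c L G₁ G₁ a a'
    | .inl a, .inr b => bisim d c L G₁ G₂ a b
    | .inr b, .inl a => bisim d c L G₂ G₁ b a
    | .inr b, .inr b' => bisim d c L G₂ G₂ b b'
  iseqv :=
    ⟨fun x => by cases x <;> exact bisim_refl _ _ _,
      fun {x y} h => by cases x <;> cases y <;> exact bisim_symm h,
      fun {x y z} h h' => by cases x <;> cases y <;> cases z <;> exact bisim_trans h h'⟩

theorem bisimStar.ncard_eq {d c L : ℕ} {G₁ G₂ : FGraph d} {v₁ : G₁.V} {v₂ : G₂.V}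
    (h : bisimStar d c L G₁ G₂ v₁ v₂) (y : G₁.V ⊕ G₂.V) :
    {a | bisimSetoid d c L G₁ G₂ (.inl a) y}.ncard =
      {b | bisimSetoid d c L G₁ G₂ (.inr b) y}.ncard := by
  cases y with
  | inl u => exact h.2.1 u
  | inr u => exact h.2.2 u

namespace ACRGNN

variable {d c L : ℕ} (N : ACRGNN d L)

theorem emb_eq_of_bisim (hN : ∀ i, CBounded c (N.agg i)) {G H : FGraph d} :
    ∀ {i : ℕ}, (∀ j < i, Finset.univ.val.map (N.emb G j) = Finset.univ.val.map (N.emb H j)) →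
      ∀ {v : G.V} {w : H.V}, bisim d c i G H v w → N.emb G i v = N.emb H i w
  | 0, _, v, w, h => by
    funext j
    simp only [emb, show G.f v = H.f w from h]
  | i + 1, hread, v, w, h => by
    have ih : ∀ {v : G.V} {w : H.V}, bisim d c i G H v w → N.emb G i v = N.emb H i w :=
      emb_eq_of_bisim hN fun j hj => hread j (by omega)
    simp only [emb]
    rw [ih (bisim_of_bisim_succ h),
      (hN i).eq_of_mcap_eq (mcap_map_neighbours_eq h (N.emb G i) (N.emb H i) fun _ _ => ih),
      hread i i.lt_succ_self]

theorem map_emb_univ_eq (hN : ∀ i, CBounded c (N.agg i)) {G₁ G₂ : FGraph d}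
    (hS : ∀ y, {a | bisimSetoid d c L G₁ G₂ (.inl a) y}.ncard =
      {b | bisimSetoid d c L G₁ G₂ (.inr b) y}.ncard) :
    ∀ i ≤ L, Finset.univ.val.map (N.emb G₁ i) = Finset.univ.val.map (N.emb G₂ i) := by
  intro i
  induction i using Nat.strong_induction_on with
  | _ i ih =>
    intro hi
    have hread : ∀ j < i, Finset.univ.val.map (N.emb G₁ j) = Finset.univ.val.map (N.emb G₂ j) :=
      fun j hj => ih j hj (by omega)
    refine Multiset.map_univ_inl_eq_map_univ_inr _ hS (Sum.elim (N.emb G₁ i) (N.emb G₂ i)) ?_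
    rintro (a | a) (b | b) hab
    · exact N.emb_eq_of_bisim hN (fun _ _ => rfl) (bisim_of_le hi hab)
    · exact N.emb_eq_of_bisim hN hread (bisim_of_le hi hab)
    · exact N.emb_eq_of_bisim hN (fun j hj => (hread j hj).symm) (bisim_of_le hi hab)
    · exact N.emb_eq_of_bisim hN (fun _ _ => rfl) (bisim_of_le hi hab)

end ACRGNN

theorem stmt7_general (d c L : ℕ)
    (G₁ G₂ : FGraph d) (v₁ : G₁.V) (v₂ : G₂.V)
    (h : bisimStar d c L G₁ G₂ v₁ v₂)
    (N : ACRGNN d L) (hN : ∀ i, CBounded c (N.agg i)) :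
    N.accepts G₁ v₁ = N.accepts G₂ v₂ :=
  congrArg N.cls <| N.emb_eq_of_bisim hN
    (fun j hj => N.map_emb_univ_eq hN h.ncard_eq j hj.le) h.1

/-- If `G₁, v₁ ∼^{L,c,*}_∃ G₂, v₂`, then every `L`-layer ACR-GNN
with `c`-bounded aggregation functions classifies the two pointed graphs the
same way. -/
theorem stmt7 (d c L : ℕ) (hc : 1 ≤ c)
    (G₁ G₂ : FGraph d) (v₁ : G₁.V) (v₂ : G₂.V)
    (h : bisimStar d c L G₁ G₂ v₁ v₂)
    (N : ACRGNN d L) (hN : ∀ i, CBounded c (N.agg i)) :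
    N.accepts G₁ v₁ = N.accepts G₂ v₂ :=
  stmt7_general d c L G₁ G₂ v₁ v₂ h N hN
end

section
/- Let L ≥ 0, c ≥ 1, q ≥ 1, d ≥ 0, and let P be a class of pointed d-featured graphs that is invariant under ∼^{L,c,q}_∃ (i.e., if (G₁,v₁) ∈ P and G₁,v₁ ∼^{L,c,q}_∃ G₂,v₂ then (G₂,v₂) ∈ P). Then there exists a d-dimensional GML^∃ formula ψ such that for every pointed d-featured graph (G, v): (G, v) ∈ P if and only if G, v ⊨ ψ. -/
/-- Formulas of `d`-dimensional graded modal logic with graded global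
(counting) modalities, `GML^∃`. -/
inductive GML (d : ℕ) : Type
  | top : GML d
  | prop : Fin d → GML d
  | not : GML d → GML d
  | and : GML d → GML d → GML d
  | dia : ℕ → GML d → GML d
  | ex : ℕ → GML d → GML d

/-- Satisfaction of a `GML^∃` formula at a vertex of a `d`-featured graph. -/
def GMLSat {d : ℕ} (G : FGraph d) : GML d → G.V → Prop
  | .top, _ => True
  | .prop i, v => G.f v i = true
  | .not φ, v => ¬ GMLSat G φ v
  | .and φ ψ, v => GMLSat G φ v ∧ GMLSat G ψ v
  | .dia k φ, v => k ≤ Set.ncard {u : G.V | G.E v u ∧ GMLSat G φ u}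
  | .ex k φ, _ => k ≤ Set.ncard {u : G.V | GMLSat G φ u}
/-! ### Auxiliary development: bisimulation types -/

/-- The (finite) set of abstract types at depth `L`. -/
def TL (d c : ℕ) : ℕ → Type
  | 0 => Fin d → Bool
  | L + 1 => (Fin d → Bool) × (TL d c L → Fin (c + 1))

def TLinst (d c : ℕ) : (L : ℕ) → Σ' _ : Fintype (TL d c L), DecidableEq (TL d c L)
  | 0 => ⟨inferInstanceAs (Fintype (Fin d → Bool)),
          inferInstanceAs (DecidableEq (Fin d → Bool))⟩
  | L + 1 =>
    letI := (TLinst d c L).1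
    letI := (TLinst d c L).2
    ⟨inferInstanceAs (Fintype ((Fin d → Bool) × (TL d c L → Fin (c + 1)))),
     inferInstanceAs (DecidableEq ((Fin d → Bool) × (TL d c L → Fin (c + 1))))⟩

instance (d c L : ℕ) : Fintype (TL d c L) := (TLinst d c L).1
instance (d c L : ℕ) : DecidableEq (TL d c L) := (TLinst d c L).2

/-- The depth-`L` type of a vertex. -/
noncomputable def tOf (d c : ℕ) : (L : ℕ) → (G : FGraph d) → G.V → TL d c L
  | 0, G, v => G.f v
  | L + 1, G, v =>
      (G.f v, fun τ =>
        ⟨min (Set.ncard {u : G.V | G.E v u ∧ tOf d c L G u = τ}) c,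
         Nat.lt_succ_of_le (min_le_right _ _)⟩)

lemma ncard_eq_natCard {α : Type} (s : Set α) : s.ncard = Nat.card s :=
  (Nat.card_coe_set_eq s).symm

/-- depth-`L` bisimilarity is type equality. -/
theorem bisim_iff (d c : ℕ) : ∀ (L : ℕ) (G₁ G₂ : FGraph d) (v₁ : G₁.V) (v₂ : G₂.V),
    bisim d c L G₁ G₂ v₁ v₂ ↔ tOf d c L G₁ v₁ = tOf d c L G₂ v₂ := by
  intro L
  induction L with
  | zero => intro G₁ G₂ v₁ v₂; rfl
  | succ L ih =>
    intro G₁ G₂ v₁ v₂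
    constructor
    · rintro ⟨hf, hforth, hback⟩
      have key : ∀ (H₁ H₂ : FGraph d) (w₁ : H₁.V) (w₂ : H₂.V),
          (∀ k, k ≤ c → ∀ u₁ : Fin k → H₁.V, Function.Injective u₁ →
            (∀ i, H₁.E w₁ (u₁ i)) →
            ∃ u₂ : Fin k → H₂.V, Function.Injective u₂ ∧ (∀ i, H₂.E w₂ (u₂ i)) ∧
              ∀ i, tOf d c L H₁ (u₁ i) = tOf d c L H₂ (u₂ i)) →
          ∀ τ : TL d c L,
            min (Set.ncard {u : H₁.V | H₁.E w₁ u ∧ tOf d c L H₁ u = τ}) c ≤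
            Set.ncard {u : H₂.V | H₂.E w₂ u ∧ tOf d c L H₂ u = τ} := by
        intro H₁ H₂ w₁ w₂ hfo τ
        set S₁ : Set H₁.V := {u | H₁.E w₁ u ∧ tOf d c L H₁ u = τ} with hS₁
        set k := min S₁.ncard c with hk
        have hkc : k ≤ c := min_le_right _ _
        have hkS : k ≤ Nat.card S₁ := by
          rw [← ncard_eq_natCard]; exact min_le_left _ _
        letI : Fintype S₁ := Fintype.ofFinite _
        obtain ⟨e⟩ : Nonempty (Fin k ↪ S₁) := by
          apply Function.Embedding.nonempty_of_card_le
          rw [← Nat.card_eq_fintype_card, ← Nat.card_eq_fintype_card]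
          simpa using hkS
        obtain ⟨u₂, hinj, hE, ht⟩ := hfo k hkc (fun i => (e i).1)
          (fun i j h => by simpa using e.injective (Subtype.ext h))
          (fun i => (e i).2.1)
        have : Function.Injective (fun i => (⟨u₂ i, hE i, by
            rw [← ht i, (e i).2.2]⟩ : {u : H₂.V | H₂.E w₂ u ∧ tOf d c L H₂ u = τ})) :=
          fun i j h => hinj (congrArg Subtype.val h)
        calc k = Nat.card (Fin k) := by simp
          _ ≤ Nat.card {u : H₂.V | H₂.E w₂ u ∧ tOf d c L H₂ u = τ} :=
              Nat.card_le_card_of_injective _ this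
          _ = _ := (ncard_eq_natCard _).symm
      have h12 := key G₁ G₂ v₁ v₂ (fun k hk u₁ hinj hE => by
        obtain ⟨u₂, h1, h2, h3⟩ := hforth k hk u₁ hinj hE
        exact ⟨u₂, h1, h2, fun i => (ih _ _ _ _).1 (h3 i)⟩) 
      have h21 := key G₂ G₁ v₂ v₁ (fun k hk u₂ hinj hE => by
        obtain ⟨u₁, h1, h2, h3⟩ := hback k hk u₂ hinj hE
        exact ⟨u₁, h1, h2, fun i => ((ih _ _ _ _).1 (h3 i)).symm⟩)
      show (_, _) = (_, _)
      refine Prod.ext hf (funext fun τ => Fin.ext ?_)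
      have a := h12 τ; have b := h21 τ
      simp only
      omega
    · intro h
      have hf : G₁.f v₁ = G₂.f v₂ := congrArg Prod.fst h
      have hcnt : ∀ τ : TL d c L,
          min (Set.ncard {u : G₁.V | G₁.E v₁ u ∧ tOf d c L G₁ u = τ}) c =
          min (Set.ncard {u : G₂.V | G₂.E v₂ u ∧ tOf d c L G₂ u = τ}) c := by
        intro τ
        have := congrFun (congrArg Prod.snd h) τ
        exact congrArg Fin.val this
      have key : ∀ (H₁ H₂ : FGraph d) (w₁ : H₁.V) (w₂ : H₂.V),
          (∀ τ : TL d c L,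
            min (Set.ncard {u : H₁.V | H₁.E w₁ u ∧ tOf d c L H₁ u = τ}) c =
            min (Set.ncard {u : H₂.V | H₂.E w₂ u ∧ tOf d c L H₂ u = τ}) c) →
          ∀ k, k ≤ c → ∀ u₁ : Fin k → H₁.V, Function.Injective u₁ →
            (∀ i, H₁.E w₁ (u₁ i)) →
            ∃ u₂ : Fin k → H₂.V, Function.Injective u₂ ∧ (∀ i, H₂.E w₂ (u₂ i)) ∧
              ∀ i, tOf d c L H₁ (u₁ i) = tOf d c L H₂ (u₂ i) := by
        intro H₁ H₂ w₁ w₂ hcnt k hk u₁ hinj hE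
        -- for each type τ, choose an injection from indices of that type into
        -- the τ-neighbours of w₂
        have hex : ∀ τ : TL d c L,
            ∃ g : {i : Fin k // tOf d c L H₁ (u₁ i) = τ} → H₂.V,
              Function.Injective g ∧
              ∀ x, H₂.E w₂ (g x) ∧ tOf d c L H₂ (g x) = τ := by
          intro τ
          set A := {i : Fin k // tOf d c L H₁ (u₁ i) = τ}
          set S₂ : Set H₂.V := {u | H₂.E w₂ u ∧ tOf d c L H₂ u = τ} with hS₂def
          have hA1 : Nat.card A ≤
              Set.ncard {u : H₁.V | H₁.E w₁ u ∧ tOf d c L H₁ u = τ} := by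
            rw [ncard_eq_natCard]
            exact Nat.card_le_card_of_injective
              (fun x : A => (⟨u₁ x.1, hE x.1, x.2⟩ :
                {u : H₁.V | H₁.E w₁ u ∧ tOf d c L H₁ u = τ}))
              (fun x y hxy => Subtype.ext (hinj (congrArg Subtype.val hxy)))
          have hA2 : Nat.card A ≤ k := by
            simpa [Nat.card_eq_fintype_card] using
              Fintype.card_le_of_injective (fun x : A => x.1) Subtype.val_injective
          have hA : Nat.card A ≤ Nat.card S₂ := by
            have h2 := hcnt τ
            rw [ncard_eq_natCard, ncard_eq_natCard] at h2
            rw [ncard_eq_natCard] at hA1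
            have h3 : Nat.card S₂ = Nat.card ↑{u : H₂.V | H₂.E w₂ u ∧ tOf d c L H₂ u = τ} := rfl
            omega
          letI : Fintype A := Fintype.ofFinite _
          letI : Fintype S₂ := Fintype.ofFinite _
          obtain ⟨e⟩ : Nonempty (A ↪ S₂) := by
            apply Function.Embedding.nonempty_of_card_le
            simpa [← Nat.card_eq_fintype_card] using hA
          exact ⟨fun x => (e x).1, fun x y hxy => e.injective (Subtype.ext hxy),
            fun x => (e x).2⟩
        choose g hginj hgmem using hex
        refine ⟨fun i => g (tOf d c L H₁ (u₁ i)) ⟨i, rfl⟩, ?_, ?_, ?_⟩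
        · have lem : ∀ (τ τ' : TL d c L) (h : τ = τ')
              (x : {i : Fin k // tOf d c L H₁ (u₁ i) = τ})
              (y : {i : Fin k // tOf d c L H₁ (u₁ i) = τ'}),
              g τ x = g τ' y → x.1 = y.1 := by
            rintro τ τ' rfl x y hxy
            exact congrArg Subtype.val (hginj τ hxy)
          intro i j hij
          have hti : tOf d c L H₁ (u₁ i) = tOf d c L H₁ (u₁ j) := by
            rw [← (hgmem (tOf d c L H₁ (u₁ i)) ⟨i, rfl⟩).2,
                ← (hgmem (tOf d c L H₁ (u₁ j)) ⟨j, rfl⟩).2]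
            exact congrArg _ hij
          exact lem _ _ hti ⟨i, rfl⟩ ⟨j, rfl⟩ hij
        · exact fun i => (hgmem _ _).1
        · exact fun i => ((hgmem _ _).2).symm
      refine ⟨hf, ?_, ?_⟩
      · intro k hk u₁ hinj hE
        obtain ⟨u₂, h1, h2, h3⟩ := key G₁ G₂ v₁ v₂ hcnt k hk u₁ hinj hE
        exact ⟨u₂, h1, h2, fun i => (ih _ _ _ _).2 (h3 i)⟩
      · intro k hk u₂ hinj hE
        obtain ⟨u₁, h1, h2, h3⟩ := key G₂ G₁ v₂ v₁ (fun τ => (hcnt τ).symm) k hk u₂ hinj hE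
        exact ⟨u₁, h1, h2, fun i => (ih _ _ _ _).2 (h3 i).symm⟩

/-! ### Formula machinery -/

def bigAnd {d : ℕ} : List (GML d) → GML d
  | [] => .top
  | φ :: l => .and φ (bigAnd l)

lemma sat_bigAnd {d : ℕ} (G : FGraph d) (v : G.V) :
    ∀ l : List (GML d), GMLSat G (bigAnd l) v ↔ ∀ φ ∈ l, GMLSat G φ v := by
  intro l
  induction l with
  | nil => simp [bigAnd, GMLSat]
  | cons φ l ih => simp [bigAnd, GMLSat, ih]

def bigOr {d : ℕ} (l : List (GML d)) : GML d := .not (bigAnd (l.map .not))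

lemma sat_bigOr {d : ℕ} (G : FGraph d) (v : G.V) (l : List (GML d)) :
    GMLSat G (bigOr l) v ↔ ∃ φ ∈ l, GMLSat G φ v := by
  simp only [bigOr, GMLSat, sat_bigAnd, List.mem_map]
  push_neg
  constructor
  · rintro ⟨ψ, ⟨φ, hφ, rfl⟩, h⟩
    exact ⟨φ, hφ, not_not.1 h⟩
  · rintro ⟨φ, hφ, h⟩
    exact ⟨.not φ, ⟨φ, hφ, rfl⟩, not_not.2 h⟩

/-- Formula fixing the feature vector. -/
def featFml {d : ℕ} (a : Fin d → Bool) : GML d :=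
  bigAnd ((List.finRange d).map fun i => if a i then .prop i else .not (.prop i))

lemma sat_litFml {d : ℕ} (G : FGraph d) (v : G.V) (i : Fin d) (b : Bool) :
    GMLSat G (if b then GML.prop i else .not (.prop i)) v ↔ G.f v i = b := by
  cases b <;> simp [GMLSat]

lemma sat_featFml {d : ℕ} (a : Fin d → Bool) (G : FGraph d) (v : G.V) :
    GMLSat G (featFml a) v ↔ G.f v = a := by
  rw [featFml, sat_bigAnd, funext_iff]
  constructor
  · intro h i
    exact (sat_litFml G v i (a i)).1 (h _ (List.mem_map.2 ⟨i, List.mem_finRange i, rfl⟩))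
  · intro h φ hφ
    obtain ⟨i, -, rfl⟩ := List.mem_map.1 hφ
    exact (sat_litFml G v i (a i)).2 (h i)

/-- Formula asserting that the number of witnesses of `φ` (local count via `dia`)
is exactly/at least `m` within cap `cap`. -/
def ctFml {d : ℕ} (cap : ℕ) (m : Fin (cap + 1)) (φ : GML d) : GML d :=
  if m.1 = cap then .dia cap φ
  else .and (.dia m.1 φ) (.not (.dia (m.1 + 1) φ))

def exFml {d : ℕ} (cap : ℕ) (m : Fin (cap + 1)) (φ : GML d) : GML d :=
  if m.1 = cap then .ex cap φ
  else .and (.ex m.1 φ) (.not (.ex (m.1 + 1) φ))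

lemma sat_ctFml {d : ℕ} (cap : ℕ) (m : Fin (cap + 1)) (φ : GML d) (G : FGraph d)
    (v : G.V) : GMLSat G (ctFml cap m φ) v ↔
      min (Set.ncard {u : G.V | G.E v u ∧ GMLSat G φ u}) cap = m.1 := by
  have hm := m.2
  by_cases h : m.1 = cap
  · simp only [ctFml, if_pos h, GMLSat]
    omega
  · simp only [ctFml, if_neg h, GMLSat]
    omega

lemma sat_exFml {d : ℕ} (cap : ℕ) (m : Fin (cap + 1)) (φ : GML d) (G : FGraph d)
    (v : G.V) : GMLSat G (exFml cap m φ) v ↔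
      min (Set.ncard {u : G.V | GMLSat G φ u}) cap = m.1 := by
  have hm := m.2
  by_cases h : m.1 = cap
  · simp only [exFml, if_pos h, GMLSat]
    omega
  · simp only [exFml, if_neg h, GMLSat]
    omega

/-- Characteristic formula of a depth-`L` type. -/
noncomputable def charFml (d c : ℕ) : (L : ℕ) → TL d c L → GML d
  | 0, τ => featFml τ
  | L + 1, τ =>
      .and (featFml τ.1)
        (bigAnd ((Finset.univ.toList (α := TL d c L)).map fun σ =>
          ctFml c (τ.2 σ) (charFml d c L σ)))
  termination_by structural L => L

theorem sat_charFml (d c : ℕ) : ∀ (L : ℕ) (τ : TL d c L) (G : FGraph d) (v : G.V),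
    GMLSat G (charFml d c L τ) v ↔ tOf d c L G v = τ := by
  intro L
  induction L with
  | zero => intro τ G v; exact sat_featFml τ G v
  | succ L ih =>
    intro τ G v
    have hsets : ∀ σ : TL d c L,
        {u : G.V | G.E v u ∧ GMLSat G (charFml d c L σ) u} =
        {u : G.V | G.E v u ∧ tOf d c L G u = σ} := by
      intro σ; ext u; simp [ih σ G u]
    constructor
    · rintro ⟨h1, h2⟩
      rw [sat_bigAnd] at h2
      show (_, _) = (τ.1, τ.2)
      refine Prod.ext ((sat_featFml _ _ _).1 h1) (funext fun σ => Fin.ext ?_)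
      have := h2 _ (List.mem_map.2 ⟨σ, by simp, rfl⟩)
      rw [sat_ctFml, hsets σ] at this
      exact this
    · intro h
      have h1 : G.f v = τ.1 := congrArg Prod.fst h
      have h2 : ∀ σ : TL d c L,
          min (Set.ncard {u : G.V | G.E v u ∧ tOf d c L G u = σ}) c = (τ.2 σ).1 := by
        intro σ
        exact congrArg Fin.val (congrFun (congrArg Prod.snd h) σ)
      refine ⟨(sat_featFml _ _ _).2 h1, (sat_bigAnd _ _ _).2 ?_⟩
      intro φ hφ
      obtain ⟨σ, _, rfl⟩ := List.mem_map.1 hφ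
      rw [sat_ctFml, hsets σ]
      exact h2 σ

/-! ### Full types (including capped global counts) -/

noncomputable def fullOf (d c L q : ℕ) (G : FGraph d) (v : G.V) :
    TL d c L × (TL d c L → Fin (q + 1)) :=
  (tOf d c L G v, fun τ =>
    ⟨min (Set.ncard {u : G.V | tOf d c L G u = τ}) q,
     Nat.lt_succ_of_le (min_le_right _ _)⟩)

noncomputable def fullFml (d c L q : ℕ) (θ : TL d c L × (TL d c L → Fin (q + 1))) : GML d :=
  .and (charFml d c L θ.1)
    (bigAnd ((Finset.univ.toList (α := TL d c L)).map fun σ =>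
      exFml q (θ.2 σ) (charFml d c L σ)))

theorem sat_fullFml (d c L q : ℕ) (θ : TL d c L × (TL d c L → Fin (q + 1)))
    (G : FGraph d) (v : G.V) :
    GMLSat G (fullFml d c L q θ) v ↔ fullOf d c L q G v = θ := by
  have hsets : ∀ σ : TL d c L,
      {u : G.V | GMLSat G (charFml d c L σ) u} = {u : G.V | tOf d c L G u = σ} := by
    intro σ; ext u; simp [sat_charFml d c L σ G u]
  constructor
  · rintro ⟨h1, h2⟩
    rw [sat_bigAnd] at h2
    refine Prod.ext ((sat_charFml _ _ _ _ _ _).1 h1) (funext fun σ => Fin.ext ?_)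
    have := h2 _ (List.mem_map.2 ⟨σ, by simp, rfl⟩)
    rw [sat_exFml, hsets σ] at this
    exact this
  · intro h
    have h1 : tOf d c L G v = θ.1 := congrArg Prod.fst h
    have h2 : ∀ σ : TL d c L,
        min (Set.ncard {u : G.V | tOf d c L G u = σ}) q = (θ.2 σ).1 := fun σ =>
      congrArg Fin.val (congrFun (congrArg Prod.snd h) σ)
    refine ⟨(sat_charFml _ _ _ _ _ _).2 h1, (sat_bigAnd _ _ _).2 ?_⟩
    intro φ hφ
    obtain ⟨σ, _, rfl⟩ := List.mem_map.1 hφ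
    rw [sat_exFml, hsets σ]
    exact h2 σ

theorem fullOf_eq_bisimQ (d c L q : ℕ) (G₁ G₂ : FGraph d) (v₁ : G₁.V) (v₂ : G₂.V)
    (h : fullOf d c L q G₁ v₁ = fullOf d c L q G₂ v₂) :
    bisimQ d c L q G₁ G₂ v₁ v₂ := by
  have h1 : tOf d c L G₁ v₁ = tOf d c L G₂ v₂ := congrArg Prod.fst h
  have h2 : ∀ σ : TL d c L,
      min (Set.ncard {u : G₁.V | tOf d c L G₁ u = σ}) q =
      min (Set.ncard {u : G₂.V | tOf d c L G₂ u = σ}) q := fun σ =>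
    congrArg Fin.val (congrFun (congrArg Prod.snd h) σ)
  refine ⟨(bisim_iff d c L G₁ G₂ v₁ v₂).2 h1, ?_, ?_⟩
  · intro u
    have e1 : {u₁ : G₁.V | bisim d c L G₁ G₁ u₁ u} =
        {u₁ : G₁.V | tOf d c L G₁ u₁ = tOf d c L G₁ u} := by
      ext w; simp [bisim_iff]
    have e2 : {u₂ : G₂.V | bisim d c L G₂ G₁ u₂ u} =
        {u₂ : G₂.V | tOf d c L G₂ u₂ = tOf d c L G₁ u} := by
      ext w; simp [bisim_iff]
    rw [e1, e2]
    exact h2 (tOf d c L G₁ u)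
  · intro u
    have e1 : {u₁ : G₁.V | bisim d c L G₁ G₂ u₁ u} =
        {u₁ : G₁.V | tOf d c L G₁ u₁ = tOf d c L G₂ u} := by
      ext w; simp [bisim_iff]
    have e2 : {u₂ : G₂.V | bisim d c L G₂ G₂ u₂ u} =
        {u₂ : G₂.V | tOf d c L G₂ u₂ = tOf d c L G₂ u} := by
      ext w; simp [bisim_iff]
    rw [e1, e2]
    exact h2 (tOf d c L G₂ u)
/-- Every class of pointed `d`-featured graphs invariant under
`∼^{L,c,q}_∃` is definable by a `GML^∃` formula. -/
theorem stmt14 (d c L q : ℕ) (hc : 1 ≤ c) (hq : 1 ≤ q)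
    (P : (G : FGraph d) → G.V → Prop)
    (hP : ∀ (G₁ G₂ : FGraph d) (v₁ : G₁.V) (v₂ : G₂.V),
      P G₁ v₁ → bisimQ d c L q G₁ G₂ v₁ v₂ → P G₂ v₂) :
    ∃ ψ : GML d, ∀ (G : FGraph d) (v : G.V), P G v ↔ GMLSat G ψ v := by
  classical
  set S : Finset (TL d c L × (TL d c L → Fin (q + 1))) :=
    Finset.univ.filter
      (fun θ => ∃ G : FGraph d, ∃ v : G.V, P G v ∧ fullOf d c L q G v = θ) with hS
  refine ⟨bigOr (S.toList.map (fullFml d c L q)), fun G v => ?_⟩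
  constructor
  · intro hPv
    rw [sat_bigOr]
    refine ⟨fullFml d c L q (fullOf d c L q G v), List.mem_map.2 ⟨_, ?_, rfl⟩,
      (sat_fullFml d c L q _ G v).2 rfl⟩
    rw [Finset.mem_toList, hS, Finset.mem_filter]
    exact ⟨Finset.mem_univ _, G, v, hPv, rfl⟩
  · intro hsat
    rw [sat_bigOr] at hsat
    obtain ⟨φ, hφ, hsatφ⟩ := hsat
    obtain ⟨θ, hθ, rfl⟩ := List.mem_map.1 hφ
    rw [Finset.mem_toList, hS, Finset.mem_filter] at hθ
    obtain ⟨-, G₁, v₁, hP1, hfull⟩ := hθ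
    have heq := (sat_fullFml d c L q θ G v).1 hsatφ
    exact hP G₁ G v₁ v hP1 (fullOf_eq_bisimQ d c L q G₁ G v₁ v (hfull.trans heq.symm))
end
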